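/- arXiv:1511.09329 — 4 statements merged into one kernel-verified Lean document; each statement's English description precedes it below -/
import Mathlib

section
/- Given a q^r-root space T ⊆ F_{q^{rn}} over F_{q^m}, there exist β_1, β_2, ..., β_u ∈ T such that T = C_{q^r}(β_1) + C_{q^r}(β_2) + ... + C_{q^r}(β_u), a sum of q^r-cyclotomic spaces over F_{q^m}. Moreover, if each C_{q^r}(β_i) is minimal among nonzero q^r-cyclotomic spaces over F_{q^m} and T is not the sum of any proper subset of the C_{q^r}(β_i), then the sum is direct. -/
/-- `P` is a `q^r`-linearized polynomial over `F`: every exponent appearing in its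
support is of the form `q ^ (r * j)`. -/
def IsLin (q r : ℕ) {F : Type*} [Field F] (P : Polynomial F) : Prop :=
  ∀ i ∈ P.support, ∃ j : ℕ, i = q ^ (r * j)

/-- The `q^r`-linearized polynomial `∑ v i * X ^ (q ^ (r * i))` associated to a vector
`v ∈ F^n`; this is the unique representative of degree `< q^(r*n)` of a class of the
quotient ring `L` of `q^r`-polynomials modulo `X^(q^(r*n)) - X`, i.e. the map `γ_r`. -/
noncomputable def vecPoly (q r n : ℕ) {F : Type*} [Field F] (v : Fin n → F) : Polynomial F :=
  ∑ i : Fin n, Polynomial.C (v i) * Polynomial.X ^ q ^ (r * (i : ℕ))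

/-- The classes of `P` and `Q` modulo `X^(q^(r*n)) - X` coincide (equality in `L`). -/
def ClassEq (q r n : ℕ) {F : Type*} [Field F] (P Q : Polynomial F) : Prop :=
  (Polynomial.X ^ q ^ (r * n) - Polynomial.X : Polynomial F) ∣ (P - Q)

/-- The class of `P` in `L` lies in `C(x) = γ_r(C)`. -/
def MemCx (q r n : ℕ) {F : Type*} [Field F] (C : Set (Fin n → F)) (P : Polynomial F) : Prop :=
  ∃ v ∈ C, ClassEq q r n P (vecPoly q r n v)

/-- `G` is the minimal generator of `C(x)`: the monic `q^r`-polynomial of minimal degree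
whose residue class modulo `X^(q^(r*n)) - X` lies in `C(x)`. -/
def IsMinGen (q r n : ℕ) {F : Type*} [Field F] (C : Set (Fin n → F)) (G : Polynomial F) : Prop :=
  IsLin q r G ∧ G.Monic ∧ MemCx q r n C G ∧
    ∀ P : Polynomial F, IsLin q r P → P.Monic → MemCx q r n C P → G.natDegree ≤ P.natDegree

/-- A code `C ⊆ F^n` is `q^r`-cyclic if it is stable under the `q^r`-shift
`(c₀, …, c_{n-1}) ↦ (c_{n-1}^{q^r}, c₀^{q^r}, …, c_{n-2}^{q^r})`. -/
def IsQrCyclic (q r n : ℕ) [NeZero n] {F : Type*} [Field F] (C : Set (Fin n → F)) : Prop :=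
  ∀ c ∈ C, (fun i : Fin n => c (i - 1) ^ q ^ r) ∈ C

/-- `D` divides `P` symbolically on the right: `P = Q ⊗ D = Q ∘ D` for some
`q^r`-polynomial `Q`. -/
def SymDvdR (q r : ℕ) {F : Type*} [Field F] (D P : Polynomial F) : Prop :=
  ∃ Q : Polynomial F, IsLin q r Q ∧ P = Q.comp D

/-- The set of roots of `P` in the extension field `K` (the root space `Z(P)`). -/
def ZSet {F : Type*} (K : Type*) [Field F] [Field K] [Algebra F K] (P : Polynomial F) :
    Set K :=
  {β : K | Polynomial.aeval β P = 0}

/-- `P` is the minimal `q^r`-polynomial of `β` over `F`: the monic `q^r`-polynomial over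
`F` of minimal degree vanishing at `β`. -/
def IsMinQPoly (q r : ℕ) {F : Type*} {K : Type*} [Field F] [Field K] [Algebra F K]
    (β : K) (P : Polynomial F) : Prop :=
  IsLin q r P ∧ P.Monic ∧ Polynomial.aeval β P = 0 ∧
    ∀ Q : Polynomial F, IsLin q r Q → Q.Monic → Polynomial.aeval β Q = 0 →
      P.natDegree ≤ Q.natDegree


section St8Aux
open Polynomial

namespace St8

variable {q r : ℕ}

lemma isLin_zero {F : Type*} [Field F] : IsLin q r (0 : Polynomial F) := by
  intro i hi; simp at hi

lemma isLin_X {F : Type*} [Field F] : IsLin q r (X : Polynomial F) := by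
  intro i hi
  rw [Polynomial.support_X] at hi
  rw [Finset.mem_singleton] at hi
  exact ⟨0, by simp [hi]⟩

lemma lin_add {F : Type*} [Field F] {P Q : Polynomial F} (hP : IsLin q r P)
    (hQ : IsLin q r Q) : IsLin q r (P + Q) := by
  intro i hi
  rcases Finset.mem_union.mp (Polynomial.support_add hi) with h | h
  · exact hP i h
  · exact hQ i h

lemma lin_neg {F : Type*} [Field F] {P : Polynomial F} (hP : IsLin q r P) :
    IsLin q r (-P) := by
  intro i hi; rw [Polynomial.support_neg] at hi; exact hP i hi

lemma lin_sub {F : Type*} [Field F] {P Q : Polynomial F} (hP : IsLin q r P)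
    (hQ : IsLin q r Q) : IsLin q r (P - Q) := by
  rw [sub_eq_add_neg]; exact lin_add hP (lin_neg hQ)

lemma lin_C_mul {F : Type*} [Field F] {P : Polynomial F} (hP : IsLin q r P) (a : F) :
    IsLin q r (Polynomial.C a * P) := by
  intro i hi
  rw [Polynomial.mem_support_iff, Polynomial.coeff_C_mul] at hi
  exact hP i (Polynomial.mem_support_iff.mpr (fun h => hi (by rw [h, mul_zero])))

lemma lin_mul_C {F : Type*} [Field F] {P : Polynomial F} (hP : IsLin q r P) (a : F) :
    IsLin q r (P * Polynomial.C a) := by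
  rw [mul_comm]; exact lin_C_mul hP a

lemma isLin_C_mul_X_pow {F : Type*} [Field F] (a : F) (k : ℕ) :
    IsLin q r (Polynomial.C a * X ^ q ^ (r * k) : Polynomial F) := by
  intro i hi
  rw [Polynomial.mem_support_iff, Polynomial.coeff_C_mul, Polynomial.coeff_X_pow] at hi
  refine ⟨k, ?_⟩
  by_contra h
  rw [if_neg (fun hh => h hh)] at hi
  exact hi (mul_zero a)

lemma lin_pow_frob {F : Type*} [Field F] {p e : ℕ} [hp : Fact p.Prime] [CharP F p]
    (hqe : q = p ^ e) {P : Polynomial F} (hP : IsLin q r P) (k : ℕ) :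
    IsLin q r (P ^ q ^ (r * k)) := by
  have hkey : P ^ q ^ (r * k) =
      Polynomial.map ((frobenius F p) ^ (e * (r * k))) ((Polynomial.expand F (p ^ (e * (r * k)))) P) := by
    haveI : ExpChar F p := ExpChar.prime hp.out
    rw [show (frobenius F p) ^ (e * (r * k)) = iterateFrobenius F p (e * (r * k)) by
      ext x; rw [RingHom.coe_pow, coe_iterateFrobenius], Polynomial.map_iterateFrobenius_expand,
      hqe, ← pow_mul]
  intro i hi
  rw [hkey] at hi
  have hi2 := Polynomial.support_map_subset _ _ hi
  rw [Polynomial.mem_support_iff, Polynomial.coeff_expand (pow_pos hp.out.pos _)] at hi2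
  by_cases hdvd : p ^ (e * (r * k)) ∣ i
  · rw [if_pos hdvd] at hi2
    obtain ⟨j, hj⟩ := hP _ (Polynomial.mem_support_iff.mpr hi2)
    obtain ⟨i', rfl⟩ := hdvd
    rw [Nat.mul_div_cancel_left _ (pow_pos hp.out.pos _)] at hj
    refine ⟨k + j, ?_⟩
    rw [hj, hqe]
    rw [← pow_mul, ← pow_add]
    ring_nf
  · rw [if_neg hdvd] at hi2; exact absurd rfl hi2

lemma isLin_coeff_zero {F : Type*} [Field F] {P : Polynomial F} (hP : IsLin q r P)
    (hq0 : q ≠ 0) : P.coeff 0 = 0 := by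
  by_contra h
  obtain ⟨j, hj⟩ := hP 0 (Polynomial.mem_support_iff.mpr h)
  exact (pow_ne_zero _ hq0) hj.symm

section Eval

variable {A K : Type*} [Field A] [Field K] [Algebra A K]

lemma aeval_sum_support (P : Polynomial A) (x : K) :
    Polynomial.aeval x P = ∑ i ∈ P.support, algebraMap A K (P.coeff i) * x ^ i := by
  rw [Polynomial.aeval_def, Polynomial.eval₂_eq_sum, Polynomial.sum_def]

lemma lin_aeval_zero (hq0 : q ≠ 0) {P : Polynomial A} (hP : IsLin q r P) :
    Polynomial.aeval (0 : K) P = 0 := by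
  rw [aeval_sum_support]
  refine Finset.sum_eq_zero fun i hi => ?_
  obtain ⟨j, rfl⟩ := hP i hi
  rw [zero_pow (pow_ne_zero _ hq0), mul_zero]

lemma lin_aeval_add {p e : ℕ} [hp : Fact p.Prime] [CharP K p] (hqe : q = p ^ e)
    {P : Polynomial A} (hP : IsLin q r P) (x y : K) :
    Polynomial.aeval (x + y) P = Polynomial.aeval x P + Polynomial.aeval y P := by
  rw [aeval_sum_support, aeval_sum_support, aeval_sum_support, ← Finset.sum_add_distrib]
  refine Finset.sum_congr rfl fun i hi => ?_
  obtain ⟨j, rfl⟩ := hP i hi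
  rw [hqe, ← pow_mul, add_pow_char_pow, mul_add]

lemma lin_aeval_sub {p e : ℕ} [hp : Fact p.Prime] [CharP K p] (hqe : q = p ^ e)
    {P : Polynomial A} (hP : IsLin q r P) (x y : K) :
    Polynomial.aeval (x - y) P = Polynomial.aeval x P - Polynomial.aeval y P := by
  have h := lin_aeval_add hqe hP (x - y) y
  rw [sub_add_cancel] at h
  rw [h]; ring

lemma pow_pow_fixed {K : Type*} [Monoid K] {a : K} {t : ℕ} (h : a ^ t = a) (j : ℕ) :
    a ^ t ^ j = a := by
  induction j with
  | zero => simp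
  | succ j ih => rw [pow_succ, pow_mul, ih, h]

end Eval

end St8

namespace St8

section Scalar

variable {q r : ℕ} {A K Fqr : Type*} [Field A] [Field K] [Algebra A K]
  [Field Fqr] [Fintype Fqr] [Algebra Fqr K]

lemma algebraMap_pow_fixed (hcardr : Fintype.card Fqr = q ^ r) (c : Fqr) (j : ℕ) :
    (algebraMap Fqr K c) ^ (q ^ r) ^ j = algebraMap Fqr K c := by
  refine pow_pow_fixed ?_ j
  rw [← map_pow, ← hcardr, FiniteField.pow_card]

lemma lin_aeval_mul_alg (hcardr : Fintype.card Fqr = q ^ r)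
    {P : Polynomial A} (hP : IsLin q r P) (c : Fqr) (x : K) :
    Polynomial.aeval (algebraMap Fqr K c * x) P =
      algebraMap Fqr K c * Polynomial.aeval x P := by
  rw [aeval_sum_support, aeval_sum_support, Finset.mul_sum]
  refine Finset.sum_congr rfl fun i hi => ?_
  obtain ⟨j, rfl⟩ := hP i hi
  rw [mul_pow, pow_mul, algebraMap_pow_fixed hcardr]
  ring

lemma lin_aeval_smul [Module Fqr K] [IsScalarTower Fqr K K]
    (hcardr : Fintype.card Fqr = q ^ r)
    {P : Polynomial A} (hP : IsLin q r P) (c : Fqr) (x : K) :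
    Polynomial.aeval (c • x) P = c • Polynomial.aeval x P := by
  rw [Algebra.smul_def, Algebra.smul_def, lin_aeval_mul_alg hcardr hP]

end Scalar

section Fixed

variable {K : Type*} [Field K] [Fintype K]

/-- In a finite field `K` containing `F'` with `#F' = s`, the solutions of `z^s = z`
are exactly the elements of (the image of) `F'`. -/
lemma pow_eq_self_iff_mem_range {F' : Type*} [Field F'] [Fintype F'] [Algebra F' K]
    {s : ℕ} (hs : 1 < s) (hcard : Fintype.card F' = s) (z : K) :
    z ^ s = z ↔ z ∈ Set.range (algebraMap F' K) := by
  classical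
  constructor
  · intro hz
    by_contra hnz
    set f : Polynomial K := X ^ s - X with hf
    have hm : f.Monic := by
      apply Polynomial.monic_X_pow_sub
      rw [Polynomial.degree_X]
      exact_mod_cast hs
    have hfdeg : f.degree = (s : WithBot ℕ) := by
      rw [hf]
      rw [Polynomial.degree_sub_eq_left_of_degree_lt]
      · exact Polynomial.degree_X_pow s
      · rw [Polynomial.degree_X_pow, Polynomial.degree_X]
        exact_mod_cast hs
    have hfnat : f.natDegree = s := Polynomial.natDegree_eq_of_degree_eq_some hfdeg
    set A : Finset K := insert z (Finset.univ.image (algebraMap F' K)) with hA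
    have hzeval : ∀ w ∈ A, f.eval w = 0 := by
      intro w hw
      rw [hA, Finset.mem_insert] at hw
      have key : w ^ s = w := by
        rcases hw with rfl | hw
        · exact hz
        · obtain ⟨c, _, rfl⟩ := Finset.mem_image.mp hw
          rw [← map_pow, ← hcard, FiniteField.pow_card]
      simp [hf, key]
    have hcardA : s < A.card := by
      rw [hA, Finset.card_insert_of_notMem, Finset.card_image_of_injective _
        (algebraMap F' K).injective, Finset.card_univ, hcard]
      · omega
      · intro hmem
        obtain ⟨c, _, hc⟩ := Finset.mem_image.mp hmem
        exact hnz ⟨c, hc⟩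
    have := Polynomial.eq_zero_of_natDegree_lt_card_of_eval_eq_zero' f A hzeval
      (by rw [hfnat]; exact hcardA)
    exact hm.ne_zero this
  · rintro ⟨c, rfl⟩
    rw [← map_pow, ← hcard, FiniteField.pow_card]

lemma charP_of_card {p k : ℕ} (hp : p.Prime) (hk : k ≠ 0)
    (h : Fintype.card K = p ^ k) : CharP K p := by
  obtain ⟨nn, hp', hcard⟩ := FiniteField.card K (ringChar K)
  have hring : ringChar K = p := by
    have hdvd : ringChar K ∣ p ^ k := by
      rw [← h, hcard]
      exact dvd_pow_self _ (by positivity)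
    exact (Nat.prime_dvd_prime_iff_eq hp' hp).mp (hp'.dvd_of_dvd_pow hdvd)
  rw [← hring]
  exact ringChar.charP K

end Fixed

section ZSub

variable {q r : ℕ} {A K Fqr : Type*} [Field A] [Field K] [Fintype K] [Algebra A K]
  [Field Fqr] [Fintype Fqr] [Algebra Fqr K]

/-- The root set of a `q^r`-linearized polynomial is an `F_{q^r}`-subspace. -/
noncomputable def zsub {p e : ℕ} (hp : Fact p.Prime) (hK : CharP K p) (hqe : q = p ^ e)
    (hq0 : q ≠ 0) (hcardr : Fintype.card Fqr = q ^ r)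
    (P : Polynomial A) (hP : IsLin q r P) : Submodule Fqr K where
  carrier := ZSet K P
  add_mem' := by
    intro a b ha hb
    have : Polynomial.aeval (a + b) P = Polynomial.aeval a P + Polynomial.aeval b P :=
      lin_aeval_add (hp := hp) hqe hP a b
    simp only [ZSet, Set.mem_setOf_eq] at *
    rw [this, ha, hb, add_zero]
  zero_mem' := by
    simp only [ZSet, Set.mem_setOf_eq]
    exact lin_aeval_zero hq0 hP
  smul_mem' := by
    intro c x hx
    simp only [ZSet, Set.mem_setOf_eq] at *
    rw [Algebra.smul_def, lin_aeval_mul_alg hcardr hP, hx, mul_zero]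

lemma zsub_coe {p e : ℕ} (hp : Fact p.Prime) (hK : CharP K p) (hqe : q = p ^ e)
    (hq0 : q ≠ 0) (hcardr : Fintype.card Fqr = q ^ r)
    (P : Polynomial A) (hP : IsLin q r P) :
    (zsub hp hK hqe hq0 hcardr P hP : Set K) = ZSet K P := rfl

lemma span_zset_coe {p e : ℕ} (hp : Fact p.Prime) (hK : CharP K p) (hqe : q = p ^ e)
    (hq0 : q ≠ 0) (hcardr : Fintype.card Fqr = q ^ r)
    (P : Polynomial A) (hP : IsLin q r P) :
    (Submodule.span Fqr (ZSet K P) : Set K) = ZSet K P := by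
  rw [← zsub_coe hp hK hqe hq0 hcardr P hP, Submodule.span_eq]

lemma mem_span_zset {p e : ℕ} (hp : Fact p.Prime) (hK : CharP K p) (hqe : q = p ^ e)
    (hq0 : q ≠ 0) (hcardr : Fintype.card Fqr = q ^ r)
    (P : Polynomial A) (hP : IsLin q r P) (x : K) :
    x ∈ Submodule.span Fqr (ZSet K P) ↔ Polynomial.aeval x P = 0 := by
  have h := span_zset_coe hp hK hqe hq0 hcardr P hP
  constructor
  · intro hx
    have : x ∈ (Submodule.span Fqr (ZSet K P) : Set K) := hx
    rw [h] at this
    exact this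
  · intro hx
    have : x ∈ (Submodule.span Fqr (ZSet K P) : Set K) := by rw [h]; exact hx
    exact this

end ZSub

end St8

namespace St8

section MinPoly

variable {q m n r : ℕ} {Fqm K : Type*} [Field Fqm] [Field K] [Fintype K] [Algebra Fqm K]

/-- The universal polynomial `X^(q^(rn)) - X` is linearized and kills everything. -/
lemma exists_minQPoly (hq1 : 1 < q) (hrn : 0 < r * n)
    (hcardK : Fintype.card K = q ^ (r * n)) (β : K) :
    ∃ P : Polynomial Fqm, IsMinQPoly q r β P := by
  classical
  have hN2 : 1 < q ^ (r * n) := Nat.one_lt_pow (by omega) hq1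
  set U : Polynomial Fqm := X ^ q ^ (r * n) - X with hU
  have hUm : U.Monic := by
    apply Polynomial.monic_X_pow_sub
    rw [Polynomial.degree_X]
    exact_mod_cast hN2
  have hUlin : IsLin q r U := by
    intro i hi
    rw [Polynomial.mem_support_iff, hU, Polynomial.coeff_sub, Polynomial.coeff_X_pow,
      Polynomial.coeff_X] at hi
    by_cases h1 : i = q ^ (r * n)
    · exact ⟨n, h1⟩
    · by_cases h2 : i = 1
      · exact ⟨0, by rw [h2, mul_zero, pow_zero]⟩
      · exfalso
        apply hi
        rw [if_neg h1, if_neg (fun hh : 1 = i => h2 hh.symm)]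
        ring
  have hUroot : Polynomial.aeval β U = 0 := by
    rw [hU, map_sub, map_pow, Polynomial.aeval_X, ← hcardK, FiniteField.pow_card,
      sub_self]
  have hex : ∃ d : ℕ, ∃ P : Polynomial Fqm,
      IsLin q r P ∧ P.Monic ∧ Polynomial.aeval β P = 0 ∧ P.natDegree = d :=
    ⟨U.natDegree, U, hUlin, hUm, hUroot, rfl⟩
  obtain ⟨P, hPlin, hPm, hProot, hPdeg⟩ := Nat.find_spec hex
  refine ⟨P, hPlin, hPm, hProot, ?_⟩
  intro Q hQlin hQm hQroot
  rw [hPdeg]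
  exact Nat.find_min' hex ⟨Q, hQlin, hQm, hQroot, rfl⟩

end MinPoly

section Division

variable {q r : ℕ} {Fqm : Type*} [Field Fqm]

/-- Symbolic right division of linearized polynomials. -/
lemma lin_div {p e : ℕ} [hp : Fact p.Prime] [CharP Fqm p] (hqe : q = p ^ e)
    (hq1 : 1 < q) (hr : 0 < r)
    {G : Polynomial Fqm} (hG : IsLin q r G) (hGm : G.Monic) (hGd : 1 ≤ G.natDegree) :
    ∀ (N : ℕ) (F : Polynomial Fqm), F.natDegree < N → IsLin q r F →
    ∃ Q R : Polynomial Fqm, IsLin q r Q ∧ IsLin q r R ∧ F = Q.comp G + R ∧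
      R.natDegree < G.natDegree := by
  intro N
  induction N with
  | zero => intro F h; omega
  | succ N ih =>
    intro F hFN hF
    by_cases hF0 : F = 0
    · exact ⟨0, 0, isLin_zero, isLin_zero, by simp [hF0], by rw [Polynomial.natDegree_zero]; exact hGd⟩
    by_cases hdeg : F.natDegree < G.natDegree
    · exact ⟨0, F, isLin_zero, hF, by simp, hdeg⟩
    push_neg at hdeg
    obtain ⟨s, hs⟩ := hF _ (Polynomial.natDegree_mem_support_of_nonzero hF0)
    obtain ⟨t, ht⟩ := hG _ (Polynomial.natDegree_mem_support_of_nonzero hGm.ne_zero)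
    have hts : t ≤ s := by
      have h1 : q ^ (r * t) ≤ q ^ (r * s) := by rw [← hs, ← ht]; exact hdeg
      have h2 : r * t ≤ r * s := (Nat.pow_le_pow_iff_right hq1).mp h1
      exact Nat.le_of_mul_le_mul_left h2 hr
    set k : ℕ := s - t with hk
    set H : Polynomial Fqm := G ^ q ^ (r * k) with hH
    have hHlin : IsLin q r H := lin_pow_frob hqe hG k
    have hHm : H.Monic := hGm.pow _
    have hHdeg : H.natDegree = q ^ (r * s) := by
      rw [hH, Polynomial.natDegree_pow, ht, ← pow_add]
      congr 1
      rw [hk, ← Nat.mul_add, Nat.sub_add_cancel hts]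
    set a : Fqm := F.leadingCoeff with ha
    have ha0 : a ≠ 0 := Polynomial.leadingCoeff_ne_zero.mpr hF0
    set F' : Polynomial Fqm := F - Polynomial.C a * H with hF'
    have hCaH0 : Polynomial.C a * H ≠ 0 := mul_ne_zero (Polynomial.C_ne_zero.mpr ha0) hHm.ne_zero
    have hdegeq : F.degree = (Polynomial.C a * H).degree := by
      rw [Polynomial.degree_eq_natDegree hF0, Polynomial.degree_eq_natDegree hCaH0,
        Polynomial.natDegree_C_mul ha0, hHdeg, hs]
    have hlead : F.leadingCoeff = (Polynomial.C a * H).leadingCoeff := by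
      rw [Polynomial.leadingCoeff_mul, Polynomial.leadingCoeff_C, hHm.leadingCoeff, mul_one]
    have hltdeg : F'.degree < F.degree := Polynomial.degree_sub_lt hdegeq hF0 hlead
    have hFpos : 0 < F.natDegree := lt_of_lt_of_le (by omega) hdeg
    have hF'N : F'.natDegree < N := by
      by_cases hF'0 : F' = 0
      · rw [hF'0, Polynomial.natDegree_zero]
        omega
      · have := Polynomial.natDegree_lt_natDegree hF'0 hltdeg
        omega
    have hF'lin : IsLin q r F' := lin_sub hF (lin_C_mul hHlin a)
    obtain ⟨Q', R', hQ'lin, hR'lin, hQR', hR'deg⟩ := ih F' hF'N hF'lin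
    refine ⟨Polynomial.C a * X ^ q ^ (r * k) + Q', R', lin_add (isLin_C_mul_X_pow a k) hQ'lin,
      hR'lin, ?_, hR'deg⟩
    rw [Polynomial.add_comp, Polynomial.mul_comp, Polynomial.C_comp, Polynomial.pow_comp,
      Polynomial.X_comp]
    have : F = Polynomial.C a * H + F' := by rw [hF']; ring
    rw [this, hQR', hH]
    ring

end Division

section DivCor

variable {q r : ℕ} {Fqm K : Type*} [Field Fqm] [Field K] [Algebra Fqm K]

/-- Roots of the minimal `q^r`-polynomial of `β` are roots of every linearized
polynomial vanishing at `β`. -/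
lemma minQPoly_roots_subset {p e : ℕ} (hp : Fact p.Prime) (hFqm : CharP Fqm p)
    (hqe : q = p ^ e) (hq1 : 1 < q) (hr : 0 < r)
    {F P : Polynomial Fqm} (hF : IsLin q r F) {β : K}
    (hroot : Polynomial.aeval β F = 0) (hP : IsMinQPoly q r β P) :
    ∀ γ : K, Polynomial.aeval γ P = 0 → Polynomial.aeval γ F = 0 := by
  haveI := hp
  haveI := hFqm
  obtain ⟨hPlin, hPm, hPβ, hPmin⟩ := hP
  have hq0 : q ≠ 0 := by omega
  have hPd : 1 ≤ P.natDegree := by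
    by_contra h
    have h0 : P.natDegree = 0 := by omega
    have hP1 : P = 1 := (hPm.natDegree_eq_zero).mp h0
    rw [hP1, map_one] at hPβ
    exact one_ne_zero hPβ
  obtain ⟨Q, R, hQlin, hRlin, hQR, hRdeg⟩ :=
    lin_div hqe hq1 hr hPlin hPm hPd (F.natDegree + 1) F (Nat.lt_succ_self _) hF
  have hQcomp : ∀ γ : K, Polynomial.aeval γ P = 0 → Polynomial.aeval γ (Q.comp P) = 0 := by
    intro γ hγ
    rw [Polynomial.aeval_comp, hγ]
    exact lin_aeval_zero hq0 hQlin
  have hRβ : Polynomial.aeval β R = 0 := by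
    have := congrArg (Polynomial.aeval β) hQR
    rw [map_add, hroot, hQcomp β hPβ, zero_add] at this
    exact this.symm
  have hR0 : R = 0 := by
    by_contra hR0
    set R' : Polynomial Fqm := R * Polynomial.C R.leadingCoeff⁻¹ with hR'
    have hR'm : R'.Monic := Polynomial.monic_mul_leadingCoeff_inv hR0
    have hR'lin : IsLin q r R' := lin_mul_C hRlin _
    have hR'β : Polynomial.aeval β R' = 0 := by
      rw [hR', map_mul, hRβ, zero_mul]
    have hR'deg : R'.natDegree = R.natDegree :=
      Polynomial.natDegree_mul_C (inv_ne_zero (Polynomial.leadingCoeff_ne_zero.mpr hR0))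
    have := hPmin R' hR'lin hR'm hR'β
    omega
  intro γ hγ
  rw [hQR, hR0, add_zero]
  exact hQcomp γ hγ

end DivCor

end St8

namespace St8

section SpanPoly

variable {q r : ℕ} {K Fqr : Type*} [Field K] [Fintype K]
  [Field Fqr] [Fintype Fqr] [Algebra Fqr K]

lemma aeval_K_eq_eval (P : Polynomial K) (x : K) : Polynomial.aeval x P = P.eval x := by
  rw [Polynomial.aeval_def, Polynomial.eval₂_eq_eval_map, Algebra.algebraMap_self,
    Polynomial.map_id]

/-- For every list `l` of elements of `K` there is a monic `q^r`-linearized polynomial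
over `K` whose root set is exactly the `F_{q^r}`-span of `l`, with degree = cardinality. -/
lemma exists_lin_poly_span {p e : ℕ} (hp : Fact p.Prime) (hK : CharP K p)
    (hqe : q = p ^ e) (hq1 : 1 < q) (hr : 0 < r)
    (hcardr : Fintype.card Fqr = q ^ r) :
    ∀ l : List K, ∃ PK : Polynomial K, IsLin q r PK ∧ PK.Monic ∧
      ZSet K PK = ↑(Submodule.span Fqr {y : K | y ∈ l}) ∧
      PK.natDegree = Nat.card (Submodule.span Fqr {y : K | y ∈ l}) := by
  haveI := hp
  haveI := hK
  have hq0 : q ≠ 0 := by omega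
  intro l
  induction l with
  | nil =>
    refine ⟨X, isLin_X, Polynomial.monic_X, ?_, ?_⟩
    · have : {y : K | y ∈ ([] : List K)} = (∅ : Set K) := by simp
      rw [this, Submodule.span_empty]
      ext x
      simp [ZSet, Polynomial.aeval_X]
    · have : {y : K | y ∈ ([] : List K)} = (∅ : Set K) := by simp
      rw [this, Submodule.span_empty, Polynomial.natDegree_X]
      haveI : Subsingleton (⊥ : Submodule Fqr K) := by
        constructor
        rintro ⟨x, hx⟩ ⟨y, hy⟩
        rw [Submodule.mem_bot] at hx hy
        subst hx; subst hy; rfl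
      haveI : Nonempty (⊥ : Submodule Fqr K) := ⟨0, Submodule.zero_mem _⟩
      exact (Nat.card_eq_one_iff_unique.mpr ⟨inferInstance, inferInstance⟩).symm
  | cons a l ihl =>
    obtain ⟨PK, hlin, hm, hroots, hdeg⟩ := ihl
    have hset : {y : K | y ∈ a :: l} = insert a {y : K | y ∈ l} := by
      ext y; simp [List.mem_cons]
    rw [hset]
    by_cases haV : a ∈ Submodule.span Fqr {y : K | y ∈ l}
    · rw [Submodule.span_insert_eq_span haV]
      exact ⟨PK, hlin, hm, hroots, hdeg⟩
    · set V : Submodule Fqr K := Submodule.span Fqr {y : K | y ∈ l} with hV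
      set c : K := Polynomial.aeval a PK with hc
      have hc0 : c ≠ 0 := by
        intro h
        apply haV
        have : a ∈ ZSet K PK := h
        rw [hroots] at this
        exact this
      have hVpos : 1 ≤ Nat.card V := Nat.card_pos
      have hdpos : 1 ≤ PK.natDegree := by omega
      have hqr1 : 1 < q ^ r := Nat.one_lt_pow (by omega) hq1
      set PN : Polynomial K := PK ^ q ^ r - Polynomial.C (c ^ (q ^ r - 1)) * PK with hPN
      have hc1 : c ^ (q ^ r - 1) ≠ 0 := pow_ne_zero _ hc0
      have hdlt : (Polynomial.C (c ^ (q ^ r - 1)) * PK).natDegree < (PK ^ q ^ r).natDegree := by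
        rw [Polynomial.natDegree_C_mul hc1, Polynomial.natDegree_pow]
        calc PK.natDegree = 1 * PK.natDegree := (one_mul _).symm
        _ < q ^ r * PK.natDegree := mul_lt_mul_of_pos_right hqr1 (by omega)
      have hdltdeg : (Polynomial.C (c ^ (q ^ r - 1)) * PK).degree < (PK ^ q ^ r).degree :=
        Polynomial.degree_lt_degree hdlt
      have hPNm : PN.Monic := by
        rw [hPN, sub_eq_add_neg]
        exact (hm.pow _).add_of_left (by rwa [Polynomial.degree_neg])
      have hPNlin : IsLin q r PN := by
        apply lin_sub
        · have : PK ^ q ^ r = PK ^ q ^ (r * 1) := by rw [mul_one]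
          rw [this]
          exact lin_pow_frob hqe hlin 1
        · exact lin_C_mul hlin _
      have hPNdeg : PN.natDegree = q ^ r * PK.natDegree := by
        rw [hPN, Polynomial.natDegree_sub_eq_left_of_natDegree_lt hdlt,
          Polynomial.natDegree_pow]
      -- evaluation of PN
      have hPNeval : ∀ x : K, Polynomial.aeval x PN =
          (Polynomial.aeval x PK) ^ q ^ r - c ^ (q ^ r - 1) * Polynomial.aeval x PK := by
        intro x
        rw [hPN, map_sub, map_pow, map_mul, Polynomial.aeval_C]
        rfl
      -- root characterization
      have hroot_iff : ∀ x : K, Polynomial.aeval x PN = 0 ↔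
          ∃ b : Fqr, Polynomial.aeval x PK = algebraMap Fqr K b * c := by
        intro x
        rw [hPNeval]
        constructor
        · intro hx
          set y : K := Polynomial.aeval x PK with hy
          have hyy : y ^ q ^ r = c ^ (q ^ r - 1) * y := by
            have := sub_eq_zero.mp hx
            exact this
          by_cases hy0 : y = 0
          · exact ⟨0, by rw [map_zero, zero_mul]; exact hy0⟩
          · have hcpow : c ^ (q ^ r - 1) * c = c ^ q ^ r := by
              rw [← pow_succ, Nat.sub_add_cancel (by omega)]
            have hz : (y / c) ^ q ^ r = y / c := by
              rw [div_pow, hyy, ← hcpow, mul_div_mul_left _ _ hc1]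
            obtain ⟨b, hb⟩ := (pow_eq_self_iff_mem_range hqr1 hcardr _).mp hz
            refine ⟨b, ?_⟩
            rw [hb]
            field_simp
        · rintro ⟨b, hb⟩
          rw [hb]
          have hbfix : (algebraMap Fqr K b) ^ q ^ r = algebraMap Fqr K b :=
            (pow_eq_self_iff_mem_range hqr1 hcardr _).mpr ⟨b, rfl⟩
          have hcpow : c ^ (q ^ r - 1) * c = c ^ q ^ r := by
            rw [← pow_succ, Nat.sub_add_cancel (by omega)]
          rw [mul_pow, hbfix]
          rw [← hcpow]
          ring
      have hsp_iff : ∀ x : K, (∃ b : Fqr, Polynomial.aeval x PK = algebraMap Fqr K b * c) ↔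
          x ∈ Submodule.span Fqr (insert a {y : K | y ∈ l}) := by
        intro x
        rw [Submodule.mem_span_insert]
        constructor
        · rintro ⟨b, hb⟩
          refine ⟨b, x - b • a, ?_, by ring⟩
          have hmem : Polynomial.aeval (x - b • a) PK = 0 := by
            rw [lin_aeval_sub hqe hlin, lin_aeval_smul hcardr hlin, Algebra.smul_def,
              hb, sub_self]
          have : x - b • a ∈ ZSet K PK := hmem
          rw [hroots] at this
          exact this
        · rintro ⟨b, z, hz, rfl⟩
          refine ⟨b, ?_⟩
          have hz0 : Polynomial.aeval z PK = 0 := by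
            have : z ∈ ZSet K PK := by rw [hroots]; exact hz
            exact this
          rw [lin_aeval_add hqe hlin, lin_aeval_smul hcardr hlin, hz0, add_zero,
            Algebra.smul_def]
      -- cardinality
      have hcard_new : Nat.card (Submodule.span Fqr (insert a {y : K | y ∈ l})) =
          q ^ r * Nat.card V := by
        set W' : Submodule Fqr K := Submodule.span Fqr (insert a {y : K | y ∈ l}) with hW'
        have hbij : Function.Bijective
            (fun bv : Fqr × V => (⟨bv.1 • a + ↑bv.2,
              Submodule.mem_span_insert.mpr ⟨bv.1, ↑bv.2, bv.2.2, rfl⟩⟩ : W')) := by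
          constructor
          · rintro ⟨b, v⟩ ⟨b', v'⟩ heq
            have heq2 : b • a + ↑v = b' • a + ↑v' := congrArg Subtype.val heq
            have hbb : b = b' := by
              by_contra hbb
              have heq3 : algebraMap Fqr K b * a + ↑v = algebraMap Fqr K b' * a + ↑v' := by
                rw [← Algebra.smul_def, ← Algebra.smul_def]; exact heq2
              have hsub : (b - b') • a = (↑v' - ↑v : K) := by
                rw [sub_smul, Algebra.smul_def, Algebra.smul_def]
                linear_combination heq3
              have hvv : (↑v' - ↑v : K) ∈ V := V.sub_mem v'.2 v.2
              rw [← hsub] at hvv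
              have : a ∈ V := by
                have := V.smul_mem (b - b')⁻¹ hvv
                rwa [smul_smul, inv_mul_cancel₀ (sub_ne_zero.mpr hbb), one_smul] at this
              exact haV this
            subst hbb
            have : (↑v : K) = ↑v' := by
              have := add_left_cancel heq2
              exact this
            ext
            · rfl
            · exact this
          · rintro ⟨x, hx⟩
            obtain ⟨b, z, hz, hxe⟩ := Submodule.mem_span_insert.mp hx
            exact ⟨⟨b, ⟨z, hz⟩⟩, by simp [hxe]⟩
        have := Nat.card_eq_of_bijective _ hbij
        rw [Nat.card_prod, Nat.card_eq_fintype_card (α := Fqr), hcardr] at this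
        exact this.symm
      refine ⟨PN, hPNlin, hPNm, ?_, ?_⟩
      · ext x
        have : x ∈ ZSet K PN ↔ Polynomial.aeval x PN = 0 := Iff.rfl
        rw [this, hroot_iff, hsp_iff]
        rfl
      · rw [hPNdeg, hcard_new, hdeg]

end SpanPoly

end St8

namespace St8

section Stable

variable {q m r : ℕ} {Fqm K Fqr : Type*} [Field Fqm] [Fintype Fqm] [Field K] [Fintype K]
  [Algebra Fqm K] [Field Fqr] [Fintype Fqr] [Algebra Fqr K]

/-- A Frobenius-stable `F_{q^r}`-subspace of `K` is the root space of a
`q^r`-linearized polynomial over `F_{q^m}`. -/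
lemma exists_lin_poly_of_stable {p e : ℕ} (hp : Fact p.Prime) (hK : CharP K p)
    (hqe : q = p ^ e) (hq1 : 1 < q) (hr : 0 < r) (hm : 0 < m)
    (hcardr : Fintype.card Fqr = q ^ r) (hcardm : Fintype.card Fqm = q ^ m)
    (W : Submodule Fqr K) (hW : ∀ x ∈ W, x ^ q ^ m ∈ W) :
    ∃ G : Polynomial Fqm, IsLin q r G ∧ ZSet K G = ↑W := by
  classical
  haveI := hp
  haveI := hK
  -- a spanning list for W
  set l : List K := (W : Set K).toFinset.toList with hl
  have hlset : {y : K | y ∈ l} = (W : Set K) := by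
    ext y
    simp [hl, Finset.mem_toList, Set.mem_toFinset]
  obtain ⟨PK, hlin, hmon, hroots, hdeg⟩ :=
    exists_lin_poly_span hp hK hqe hq1 hr hcardr (Fqr := Fqr) l
  rw [hlset, Submodule.span_eq] at hroots hdeg
  -- Frobenius
  haveI hexp : ExpChar K p := ExpChar.prime hp.out
  set φ : K →+* K := iterateFrobenius K p (e * m) with hφdef
  have hφ : ∀ x : K, φ x = x ^ q ^ m := by
    intro x
    rw [hφdef, iterateFrobenius_def, hqe, ← pow_mul]
  have hφinj : Function.Injective φ := φ.injective
  have hφsurj : Function.Surjective φ := Finite.injective_iff_surjective.mp hφinj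
  set P' : Polynomial K := PK.map φ with hP'
  have hP'eval : ∀ y : K, P'.eval (φ y) = φ (PK.eval y) := by
    intro y
    rw [hP', Polynomial.eval_map, Polynomial.eval₂_hom]
  have himg : φ '' (W : Set K) = (W : Set K) := by
    apply Set.eq_of_subset_of_ncard_le ?_ ?_ (Set.toFinite _)
    · rintro _ ⟨y, hy, rfl⟩
      rw [hφ]
      exact hW y hy
    · rw [Set.ncard_image_of_injective _ hφinj]
  -- roots of P' are exactly W
  have hZP' : ∀ x : K, P'.eval x = 0 ↔ x ∈ W := by
    intro x
    obtain ⟨y, rfl⟩ := hφsurj x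
    rw [hP'eval]
    constructor
    · intro h
      have hy0 : PK.eval y = 0 := hφinj (by rw [h, map_zero])
      have hyW : y ∈ W := by
        have : y ∈ ZSet K PK := by
          have := aeval_K_eq_eval PK y
          simp only [ZSet, Set.mem_setOf_eq]
          rw [this, hy0]
        rw [hroots] at this
        exact this
      have : φ y ∈ φ '' (W : Set K) := ⟨y, hyW, rfl⟩
      rw [himg] at this
      exact this
    · intro h
      have hyW : y ∈ W := by
        have : φ y ∈ φ '' (W : Set K) := by rw [himg]; exact h
        obtain ⟨y', hy', heq⟩ := this
        rwa [← hφinj heq]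
      have : y ∈ ZSet K PK := by rw [hroots]; exact hyW
      have hy0 : Polynomial.aeval y PK = 0 := this
      rw [aeval_K_eq_eval] at hy0
      rw [hy0, map_zero]
  -- compare P' with PK
  have hP'm : P'.Monic := hmon.map φ
  have hP'deg : P'.natDegree = PK.natDegree := hmon.natDegree_map φ
  have hPeq : P' = PK := by
    by_contra hne
    have hD0 : P' - PK ≠ 0 := sub_ne_zero.mpr hne
    have hdlt : (P' - PK).degree < P'.degree := by
      apply Polynomial.degree_sub_lt
      · rw [Polynomial.degree_eq_natDegree hP'm.ne_zero,
          Polynomial.degree_eq_natDegree hmon.ne_zero, hP'deg]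
      · exact hP'm.ne_zero
      · rw [hP'm.leadingCoeff, hmon.leadingCoeff]
    have hnatlt : (P' - PK).natDegree < PK.natDegree := by
      have := Polynomial.natDegree_lt_natDegree hD0 hdlt
      omega
    have hWfin : (W : Set K).Finite := Set.toFinite _
    have heval : ∀ w ∈ hWfin.toFinset, (P' - PK).eval w = 0 := by
      intro w hw
      rw [Set.Finite.mem_toFinset] at hw
      have h1 : P'.eval w = 0 := (hZP' w).mpr hw
      have h2 : PK.eval w = 0 := by
        have : w ∈ ZSet K PK := by rw [hroots]; exact hw
        have h3 : Polynomial.aeval w PK = 0 := this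
        rwa [aeval_K_eq_eval] at h3
      rw [Polynomial.eval_sub, h1, h2, sub_zero]
    have hcardW : PK.natDegree = hWfin.toFinset.card := by
      rw [hdeg, ← Set.ncard_eq_toFinset_card (W : Set K) hWfin, ← Nat.card_coe_set_eq]
      rfl
    have := Polynomial.eq_zero_of_natDegree_lt_card_of_eval_eq_zero' (P' - PK)
      hWfin.toFinset heval (by omega)
    exact hD0 this
  -- coefficients of PK are fixed by the q^m-power map, hence lie in Fqm
  have hqm1 : 1 < q ^ m := Nat.one_lt_pow (by omega) hq1
  have hcoeff : ∀ i : ℕ, PK.coeff i ∈ Set.range (algebraMap Fqm K) := by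
    intro i
    have h1 : φ (PK.coeff i) = PK.coeff i := by
      conv_rhs => rw [← hPeq]
      rw [hP', Polynomial.coeff_map]
    rw [hφ] at h1
    exact (pow_eq_self_iff_mem_range hqm1 hcardm _).mp h1
  have hlift : PK ∈ Polynomial.lifts (algebraMap Fqm K) :=
    (Polynomial.lifts_iff_coeff_lifts PK).mpr hcoeff
  obtain ⟨G, hG⟩ := (Polynomial.mem_lifts PK).mp hlift
  refine ⟨G, ?_, ?_⟩
  · intro i hi
    apply hlin
    rw [Polynomial.mem_support_iff] at hi ⊢
    rw [← hG, Polynomial.coeff_map]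
    intro h
    exact hi ((map_eq_zero_iff _ (algebraMap Fqm K).injective).mp h)
  · rw [← hroots]
    ext x
    simp only [ZSet, Set.mem_setOf_eq]
    rw [Polynomial.aeval_def, ← Polynomial.eval_map, hG, ← aeval_K_eq_eval]

end Stable

end St8

namespace St8

section SumLemmas

variable {q m r : ℕ} {Fqm K Fqr : Type*} [Field Fqm] [Fintype Fqm] [Field K] [Fintype K]
  [Algebra Fqm K] [Field Fqr] [Fintype Fqr] [Algebra Fqr K]

/-- Root sets of polynomials over `F_{q^m}` are stable under `x ↦ x^(q^m)`. -/
lemma zset_pow_stable {p e : ℕ} (hp : Fact p.Prime) (hK : CharP K p)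
    (hqe : q = p ^ e) (hcardm : Fintype.card Fqm = q ^ m)
    (P : Polynomial Fqm) (y : K) (hy : Polynomial.aeval y P = 0) :
    Polynomial.aeval (y ^ q ^ m) P = 0 := by
  haveI := hp
  haveI := hK
  haveI hexp : ExpChar K p := ExpChar.prime hp.out
  set φ : K →+* K := iterateFrobenius K p (e * m) with hφdef
  have hφ : ∀ x : K, φ x = x ^ q ^ m := by
    intro x
    rw [hφdef, iterateFrobenius_def, hqe, ← pow_mul]
  have key : Polynomial.aeval (y ^ q ^ m) P = φ (Polynomial.aeval y P) := by
    rw [aeval_sum_support, aeval_sum_support, map_sum]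
    refine Finset.sum_congr rfl fun i _ => ?_
    rw [map_mul, map_pow, hφ, hφ]
    congr 1
    rw [← map_pow, ← hcardm, FiniteField.pow_card]
  rw [key, hy, map_zero]

lemma sum_le_of_le {ι : Type*} (s : Finset ι) (M : ι → Submodule Fqr K)
    (N' : Submodule Fqr K) (h : ∀ i ∈ s, M i ≤ N') : (∑ i ∈ s, M i) ≤ N' := by
  classical
  induction s using Finset.induction_on with
  | empty => rw [Finset.sum_empty, Submodule.zero_eq_bot]; exact bot_le
  | @insert a s' ha ih =>
    rw [Finset.sum_insert ha, Submodule.add_eq_sup]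
    exact sup_le (h a (Finset.mem_insert_self a s'))
      (ih fun i hi => h i (Finset.mem_insert_of_mem hi))

lemma sum_pow_stable {p e : ℕ} (hp : Fact p.Prime) (hK : CharP K p) (hqe : q = p ^ e)
    (hq0 : q ≠ 0) {ι : Type*} (s : Finset ι) (M : ι → Submodule Fqr K)
    (hstab : ∀ j ∈ s, ∀ y ∈ M j, y ^ q ^ m ∈ M j) :
    ∀ y ∈ ∑ j ∈ s, M j, y ^ q ^ m ∈ ∑ j ∈ s, M j := by
  classical
  haveI := hp
  haveI := hK
  induction s using Finset.induction_on with
  | empty =>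
    intro y hy
    rw [Finset.sum_empty, Submodule.zero_eq_bot, Submodule.mem_bot] at hy ⊢
    rw [hy, zero_pow (pow_ne_zero _ hq0)]
  | @insert a s' ha ih =>
    intro y hy
    rw [Finset.sum_insert ha, Submodule.add_eq_sup, Submodule.mem_sup] at hy ⊢
    obtain ⟨v, hv, w, hw, rfl⟩ := hy
    have hpow : (v + w) ^ q ^ m = v ^ q ^ m + w ^ q ^ m := by
      rw [hqe, ← pow_mul]
      exact add_pow_char_pow v w p (e * m)
    rw [hpow]
    exact ⟨v ^ q ^ m, hstab a (Finset.mem_insert_self a s') v hv,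
      w ^ q ^ m, ih (fun j hj => hstab j (Finset.mem_insert_of_mem hj)) w hw, rfl⟩

end SumLemmas

end St8


end St8Aux

open St8

/-- Every `q^r`-root space `T ⊆ F_{q^{rn}}` over `F_{q^m}` is a sum of
`q^r`-cyclotomic spaces `C_{q^r}(β₁) + ⋯ + C_{q^r}(β_u)` with the `β_i ∈ T`. Moreover,
if each `C_{q^r}(β_i)` is minimal among nonzero `q^r`-cyclotomic spaces and `T` is not
the sum of any proper subfamily, then the sum is direct. -/
theorem statement8
    (q m n r : ℕ) (hq : IsPrimePow q) (hm : 0 < m) (hr : 0 < r) [NeZero n]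
    (hmn : m ∣ r * n)
    (Fqm Fqr K : Type*) [Field Fqm] [Fintype Fqm] [Field Fqr] [Fintype Fqr]
    [Field K] [Fintype K] [Algebra Fqm K] [Algebra Fqr K]
    (hcardm : Fintype.card Fqm = q ^ m) (hcardr : Fintype.card Fqr = q ^ r)
    (hcardK : Fintype.card K = q ^ (r * n))
    (T : Set K) (hT : ∃ F : Polynomial Fqm, IsLin q r F ∧ T = ZSet K F) :
    (∃ (u : ℕ) (β : Fin u → K) (P : Fin u → Polynomial Fqm),
      (∀ i : Fin u, β i ∈ T ∧ IsMinQPoly q r (β i) (P i)) ∧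
      T = ↑(∑ i : Fin u, Submodule.span Fqr (ZSet K (P i)))) ∧
    (∀ (u : ℕ) (β : Fin u → K) (P : Fin u → Polynomial Fqm),
      (∀ i : Fin u, β i ∈ T ∧ IsMinQPoly q r (β i) (P i)) →
      T = ↑(∑ i : Fin u, Submodule.span Fqr (ZSet K (P i))) →
      (∀ i : Fin u, Submodule.span Fqr (ZSet K (P i)) ≠ ⊥ ∧
        ∀ (γ : K) (Q : Polynomial Fqm), IsMinQPoly q r γ Q →
          Submodule.span Fqr (ZSet K Q) ≠ ⊥ →
          Submodule.span Fqr (ZSet K Q) ≤ Submodule.span Fqr (ZSet K (P i)) →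
          Submodule.span Fqr (ZSet K Q) = Submodule.span Fqr (ZSet K (P i))) →
      (∀ S : Finset (Fin u), S ≠ Finset.univ →
        (↑(∑ i ∈ S, Submodule.span Fqr (ZSet K (P i))) : Set K) ≠ T) →
      ∀ i : Fin u, Disjoint (Submodule.span Fqr (ZSet K (P i)))
        (∑ j ∈ Finset.univ.erase i, Submodule.span Fqr (ZSet K (P j)))) := by
  classical
  obtain ⟨F, hFlin, hTZ⟩ := hT
  obtain ⟨p, e, hpp, he, hqpe⟩ := hq
  have hp : Fact (Nat.Prime p) := ⟨hpp.nat_prime⟩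
  have hqe : q = p ^ e := hqpe.symm
  have hq1 : 1 < q := by
    rw [hqe]
    exact Nat.one_lt_pow (by omega) hpp.nat_prime.one_lt
  have hq0 : q ≠ 0 := by omega
  have hrn : 0 < r * n := Nat.mul_pos hr (Nat.pos_of_ne_zero (NeZero.ne n))
  have hK : CharP K p := charP_of_card hp.out (k := e * (r * n))
    (by positivity) (by rw [hcardK, hqe, ← pow_mul])
  have hFqmC : CharP Fqm p := charP_of_card hp.out (k := e * m)
    (by positivity) (by rw [hcardm, hqe, ← pow_mul])
  haveI := hp
  haveI := hK
  haveI := hFqmC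
  have hmpall : ∀ β : K, ∃ P : Polynomial Fqm, IsMinQPoly q r β P := fun β =>
    exists_minQPoly hq1 hrn hcardK β
  choose mp hmp using hmpall
  constructor
  · -- Part 1
    haveI : Finite ↥T := Set.toFinite T
    obtain ⟨u, ⟨eqv⟩⟩ := Finite.exists_equiv_fin ↥T
    refine ⟨u, fun i => ↑(eqv.symm i), fun i => mp ↑(eqv.symm i),
      fun i => ⟨(eqv.symm i).2, hmp _⟩, ?_⟩
    apply Set.Subset.antisymm
    · intro x hx
      set i : Fin u := eqv ⟨x, hx⟩ with hi
      have hxi : (↑(eqv.symm i) : K) = x := by rw [hi, Equiv.symm_apply_apply]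
      have hx0 : x ∈ ZSet K (mp ↑(eqv.symm i)) := by
        show Polynomial.aeval x (mp ↑(eqv.symm i)) = 0
        rw [hxi]
        exact (hmp x).2.2.1
      have hmem : x ∈ Submodule.span Fqr (ZSet K (mp ↑(eqv.symm i))) :=
        Submodule.subset_span hx0
      have hle := Finset.single_le_sum
        (f := fun j : Fin u => Submodule.span Fqr (ZSet K (mp ↑(eqv.symm j))))
        (fun j _ => bot_le) (Finset.mem_univ i)
      exact hle hmem
    · have hsum_le : (∑ i : Fin u, Submodule.span Fqr (ZSet K (mp ↑(eqv.symm i)))) ≤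
          zsub hp hK hqe hq0 hcardr F hFlin := by
        apply sum_le_of_le
        intro i _
        rw [Submodule.span_le, zsub_coe]
        intro γ hγ
        have hβT : Polynomial.aeval (↑(eqv.symm i) : K) F = 0 := by
          exact (Set.ext_iff.mp hTZ _).mp (eqv.symm i).2
        exact minQPoly_roots_subset hp hFqmC hqe hq1 hr hFlin hβT (hmp _) γ hγ
      intro x hx
      rw [hTZ]
      exact hsum_le hx
  · -- Part 2
    intro u β P hβP hsum hmin hS i
    rw [Submodule.disjoint_def]
    intro x hxi hxW
    by_contra hx0
    have hPi := (hβP i).2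
    have hPilin : IsLin q r (P i) := hPi.1
    have hx_root : Polynomial.aeval x (P i) = 0 :=
      (mem_span_zset hp hK hqe hq0 hcardr (P i) hPilin x).mp hxi
    have hQx := hmp x
    have hsub1 : ZSet K (mp x) ⊆ ZSet K (P i) := fun γ hγ =>
      minQPoly_roots_subset hp hFqmC hqe hq1 hr hPilin hx_root hQx γ hγ
    have hCx_le : Submodule.span Fqr (ZSet K (mp x)) ≤ Submodule.span Fqr (ZSet K (P i)) :=
      Submodule.span_mono hsub1
    have hCx_ne : Submodule.span Fqr (ZSet K (mp x)) ≠ ⊥ := by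
      intro hbot
      have hxq : x ∈ Submodule.span Fqr (ZSet K (mp x)) :=
        Submodule.subset_span (hQx.2.2.1)
      rw [hbot, Submodule.mem_bot] at hxq
      exact hx0 hxq
    have hCx_eq := (hmin i).2 x (mp x) hQx hCx_ne hCx_le
    set Wsum := ∑ j ∈ Finset.univ.erase i, Submodule.span Fqr (ZSet K (P j)) with hWsum
    have hWstab : ∀ y ∈ Wsum, y ^ q ^ m ∈ Wsum := by
      apply sum_pow_stable hp hK hqe hq0
      intro j _ y hy
      have hy0 : Polynomial.aeval y (P j) = 0 :=
        (mem_span_zset hp hK hqe hq0 hcardr (P j) (hβP j).2.1 y).mp hy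
      exact (mem_span_zset hp hK hqe hq0 hcardr (P j) (hβP j).2.1 _).mpr
        (zset_pow_stable hp hK hqe hcardm (P j) y hy0)
    obtain ⟨G, hGlin, hGZ⟩ :=
      exists_lin_poly_of_stable hp hK hqe hq1 hr hm hcardr hcardm Wsum hWstab
    have hxG : Polynomial.aeval x G = 0 := by
      have : x ∈ ZSet K G := by rw [hGZ]; exact hxW
      exact this
    have hsub2 : ZSet K (mp x) ⊆ (Wsum : Set K) := by
      rw [← hGZ]
      exact fun γ hγ => minQPoly_roots_subset hp hFqmC hqe hq1 hr hGlin hxG hQx γ hγ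
    have hCx_leW : Submodule.span Fqr (ZSet K (mp x)) ≤ Wsum := Submodule.span_le.mpr hsub2
    have hCi_leW : Submodule.span Fqr (ZSet K (P i)) ≤ Wsum := hCx_eq ▸ hCx_leW
    have htot : (∑ j : Fin u, Submodule.span Fqr (ZSet K (P j))) = Wsum := by
      rw [← Finset.add_sum_erase Finset.univ _ (Finset.mem_univ i), ← hWsum,
        Submodule.add_eq_sup, sup_eq_right.mpr hCi_leW]
    have herase_ne : Finset.univ.erase i ≠ Finset.univ := by
      intro h
      have hmemi := Finset.mem_univ i
      rw [← h] at hmemi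
      exact Finset.notMem_erase i _ hmemi
    apply hS (Finset.univ.erase i) herase_ne
    rw [← hWsum, ← htot, ← hsum]
end

section
/- Let C_1, C_2 ⊆ F_{q^m}^n be F_{q^m}-linear q^r-cyclic codes with minimal generators G_1(x) and G_2(x) of C_1(x) and C_2(x). Then F_{q^m}^n = C_1 ⊕ C_2 (i.e., C_1 and C_2 are complementary) if and only if G_1(x) and G_2(x) are coprime on the right (their greatest common right divisor with respect to the symbolic product is x) and deg_{q^r}(G_1(x)) + deg_{q^r}(G_2(x)) = n. -/
namespace S10

open Polynomial Finset

variable {F : Type*} [Field F] {q r : ℕ}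

lemma e_strictMono (hq2 : 2 ≤ q) (hr0 : 0 < r) : StrictMono (fun j : ℕ => q ^ (r * j)) :=
  fun i j hij => Nat.pow_lt_pow_right hq2 ((Nat.mul_lt_mul_left hr0).mpr hij)

lemma e_pos (hq2 : 2 ≤ q) (j : ℕ) : 0 < q ^ (r * j) := pow_pos (by omega) _

lemma e_le_iff (hq2 : 2 ≤ q) (hr0 : 0 < r) {i j : ℕ} :
    q ^ (r * i) ≤ q ^ (r * j) ↔ i ≤ j := (e_strictMono hq2 hr0).le_iff_le

lemma e_inj (hq2 : 2 ≤ q) (hr0 : 0 < r) {i j : ℕ} (h : q ^ (r * i) = q ^ (r * j)) : i = j :=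
  (e_strictMono hq2 hr0).injective h

lemma frob_pow {R : Type*} [CommRing R] (hfrP : ∀ a b : R, (a + b) ^ q = a ^ q + b ^ q)
    (k : ℕ) (a b : R) :
    (a + b) ^ q ^ k = a ^ q ^ k + b ^ q ^ k := by
  induction k with
  | zero => simp
  | succ k ih => rw [pow_succ, pow_mul, pow_mul, pow_mul, ih, hfrP]

lemma frob_sub {R : Type*} [CommRing R] (hfrP : ∀ a b : R, (a + b) ^ q = a ^ q + b ^ q)
    (k : ℕ) (a b : R) :
    (a - b) ^ q ^ k = a ^ q ^ k - b ^ q ^ k := by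
  have := frob_pow hfrP k (a - b) b
  rw [sub_add_cancel] at this
  rw [eq_sub_iff_add_eq, ← this]

lemma frob_sum {R : Type*} [CommRing R] (hq2 : 2 ≤ q)
    (hfrP : ∀ a b : R, (a + b) ^ q = a ^ q + b ^ q)
    {ι : Type*} (s : Finset ι) (f : ι → R) (k : ℕ) :
    (∑ i ∈ s, f i) ^ q ^ k = ∑ i ∈ s, f i ^ q ^ k := by
  classical
  induction s using Finset.induction_on with
  | empty => simp [zero_pow (pow_ne_zero k (by omega : q ≠ 0))]
  | insert a s h ih => rw [Finset.sum_insert h, Finset.sum_insert h, frob_pow hfrP, ih]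

lemma isLin_zero : IsLin q r (0 : Polynomial F) := by
  intro i hi; simp at hi

lemma isLin_add {P Q : Polynomial F} (hP : IsLin q r P) (hQ : IsLin q r Q) :
    IsLin q r (P + Q) := by
  intro i hi
  rcases Finset.mem_union.mp (Polynomial.support_add hi) with h | h
  · exact hP i h
  · exact hQ i h

lemma isLin_neg {P : Polynomial F} (hP : IsLin q r P) : IsLin q r (-P) := by
  intro i hi; exact hP i (by simpa using hi)

lemma isLin_sub {P Q : Polynomial F} (hP : IsLin q r P) (hQ : IsLin q r Q) :
    IsLin q r (P - Q) := by
  rw [sub_eq_add_neg]; exact isLin_add hP (isLin_neg hQ)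

lemma isLin_smul {P : Polynomial F} (c : F) (hP : IsLin q r P) : IsLin q r (c • P) := by
  intro i hi; exact hP i (Polynomial.support_smul c P hi)

lemma isLin_C_mul {P : Polynomial F} (c : F) (hP : IsLin q r P) : IsLin q r (C c * P) := by
  rw [← smul_eq_C_mul]; exact isLin_smul c hP

lemma isLin_sum {ι : Type*} (s : Finset ι) (f : ι → Polynomial F)
    (h : ∀ i ∈ s, IsLin q r (f i)) : IsLin q r (∑ i ∈ s, f i) := by
  classical
  induction s using Finset.induction_on with
  | empty => simpa using isLin_zero
  | insert a s hne ih =>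
      rw [Finset.sum_insert hne]
      exact isLin_add (h _ (Finset.mem_insert_self _ _))
        (ih fun i hi => h i (Finset.mem_insert_of_mem hi))

lemma isLin_monomial (j : ℕ) (c : F) : IsLin q r (monomial (q ^ (r * j)) c) := by
  intro i hi
  have := Polynomial.support_monomial' (q ^ (r * j)) c hi
  simp at this
  exact ⟨j, this⟩

lemma isLin_X : IsLin q r (X : Polynomial F) := by
  intro i hi
  have h1 := Polynomial.mem_support_iff.mp hi
  rw [Polynomial.coeff_X] at h1
  by_cases h : 1 = i
  · exact ⟨0, by simp [← h]⟩
  · simp [h] at h1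

lemma isLin_X_pow (j : ℕ) : IsLin q r (X ^ q ^ (r * j) : Polynomial F) := by
  intro i hi
  rw [Polynomial.support_X_pow] at hi
  simp at hi
  exact ⟨j, hi⟩


lemma pow_frob_eq (hq2 : 2 ≤ q) (hfrP : ∀ a b : Polynomial F, (a + b) ^ q = a ^ q + b ^ q)
    (P : Polynomial F) (k : ℕ) :
    P ^ q ^ k = ∑ i ∈ P.support, monomial (i * q ^ k) (P.coeff i ^ q ^ k) := by
  conv_lhs => rw [Polynomial.as_sum_support P]
  rw [frob_sum hq2 hfrP]
  exact Finset.sum_congr rfl fun i _ => by rw [Polynomial.monomial_pow]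

lemma e_mul (j t : ℕ) : q ^ (r * j) * q ^ (r * t) = q ^ (r * (j + t)) := by
  rw [← pow_add, mul_add]

lemma isLin_pow_frob (hq2 : 2 ≤ q) (hfrP : ∀ a b : Polynomial F, (a + b) ^ q = a ^ q + b ^ q)
    {P : Polynomial F} (hP : IsLin q r P) (t : ℕ) : IsLin q r (P ^ q ^ (r * t)) := by
  rw [pow_frob_eq hq2 hfrP]
  apply isLin_sum
  intro i hi
  obtain ⟨j, hj⟩ := hP i hi
  rw [hj, e_mul]
  exact isLin_monomial _ _

lemma monomial_comp' (a : F) (k : ℕ) (Q : Polynomial F) :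
    (monomial k a).comp Q = C a * Q ^ k := by
  rw [← Polynomial.C_mul_X_pow_eq_monomial, Polynomial.mul_comp, Polynomial.C_comp,
    Polynomial.X_pow_comp]

lemma isLin_comp (hq2 : 2 ≤ q) (hfrP : ∀ a b : Polynomial F, (a + b) ^ q = a ^ q + b ^ q)
    {P Q : Polynomial F} (hP : IsLin q r P) (hQ : IsLin q r Q) : IsLin q r (P.comp Q) := by
  have h1 : P.comp Q = ∑ i ∈ P.support, (monomial i (P.coeff i)).comp Q := by
    conv_lhs => rw [Polynomial.as_sum_support P]
    rw [Polynomial.sum_comp]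
  rw [h1]
  apply isLin_sum
  intro i hi
  obtain ⟨j, hj⟩ := hP i hi
  rw [monomial_comp', hj]
  exact isLin_C_mul _ (isLin_pow_frob hq2 hfrP hQ j)

lemma lin_comp_add (hfrP : ∀ a b : Polynomial F, (a + b) ^ q = a ^ q + b ^ q)
    {A : Polynomial F} (hA : IsLin q r A) (S T : Polynomial F) :
    A.comp (S + T) = A.comp S + A.comp T := by
  conv_lhs => rw [Polynomial.as_sum_support A]
  conv_rhs => rw [Polynomial.as_sum_support A]
  rw [Polynomial.sum_comp, Polynomial.sum_comp, Polynomial.sum_comp, ← Finset.sum_add_distrib]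
  refine Finset.sum_congr rfl fun i hi => ?_
  obtain ⟨j, hj⟩ := hA i hi
  rw [monomial_comp', monomial_comp', monomial_comp', hj, frob_pow hfrP (r * j), mul_add]

lemma lin_comp_sub (hfrP : ∀ a b : Polynomial F, (a + b) ^ q = a ^ q + b ^ q)
    {A : Polynomial F} (hA : IsLin q r A) (S T : Polynomial F) :
    A.comp (S - T) = A.comp S - A.comp T := by
  have := lin_comp_add hfrP hA (S - T) T
  rw [sub_add_cancel] at this
  rw [eq_sub_iff_add_eq, ← this]

lemma lin_eq_sum_range (hq2 : 2 ≤ q) (hr0 : 0 < r) {P : Polynomial F} (hP : IsLin q r P)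
    {s : ℕ} (hdeg : P.natDegree ≤ q ^ (r * s)) :
    P = ∑ j ∈ Finset.range (s + 1), monomial (q ^ (r * j)) (P.coeff (q ^ (r * j))) := by
  classical
  have hinj : ∀ x ∈ Finset.range (s+1), ∀ y ∈ Finset.range (s+1),
      q ^ (r * x) = q ^ (r * y) → x = y := fun x _ y _ h => e_inj hq2 hr0 h
  have himg : P.support ⊆ (Finset.range (s + 1)).image (fun j => q ^ (r * j)) := by
    intro i hi
    obtain ⟨j, hj⟩ := hP i hi
    have hle : i ≤ P.natDegree := Polynomial.le_natDegree_of_ne_zero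
      (Polynomial.mem_support_iff.mp hi)
    have hjs : j ≤ s := (e_le_iff hq2 hr0).mp (by rw [← hj]; exact le_trans hle hdeg)
    exact Finset.mem_image.mpr ⟨j, Finset.mem_range.mpr (by omega), hj.symm⟩
  have := Finset.sum_image (f := fun i => monomial i (P.coeff i)) hinj
  rw [← this]
  conv_lhs => rw [Polynomial.as_sum_support P]
  apply Finset.sum_subset himg
  intro i _ hi
  rw [Polynomial.notMem_support_iff.mp hi, Polynomial.monomial_zero_right]

lemma isLin_vecPoly (n : ℕ) (v : Fin n → F) : IsLin q r (vecPoly q r n v) :=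
  isLin_sum _ _ fun i _ => isLin_C_mul _ (isLin_X_pow (i : ℕ))

lemma vecPoly_coeff (hq2 : 2 ≤ q) (hr0 : 0 < r) {n : ℕ} (v : Fin n → F) (i : Fin n) :
    (vecPoly q r n v).coeff (q ^ (r * (i : ℕ))) = v i := by
  unfold vecPoly
  rw [Polynomial.finset_sum_coeff]
  rw [Finset.sum_eq_single i]
  · simp [Polynomial.coeff_C_mul, Polynomial.coeff_X_pow]
  · intro b _ hb
    rw [Polynomial.coeff_C_mul, Polynomial.coeff_X_pow, if_neg, mul_zero]
    intro h
    exact hb (Fin.ext (e_inj hq2 hr0 h.symm))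
  · intro h; exact absurd (Finset.mem_univ i) h

lemma vecPoly_natDegree_le (hq2 : 2 ≤ q) (hr0 : 0 < r) {n : ℕ} (hn : 0 < n) (v : Fin n → F) :
    (vecPoly q r n v).natDegree ≤ q ^ (r * (n - 1)) := by
  unfold vecPoly
  refine Polynomial.natDegree_sum_le_of_forall_le _ _ fun i _ => ?_
  refine le_trans (Polynomial.natDegree_C_mul_le _ _) ?_
  rw [Polynomial.natDegree_X_pow]
  exact (e_le_iff hq2 hr0).mpr (by omega)

lemma vecPoly_natDegree_lt (hq2 : 2 ≤ q) (hr0 : 0 < r) {n : ℕ} (hn : 0 < n) (v : Fin n → F) :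
    (vecPoly q r n v).natDegree < q ^ (r * n) :=
  lt_of_le_of_lt (vecPoly_natDegree_le hq2 hr0 hn v)
    (e_strictMono hq2 hr0 (by omega))

lemma vecPoly_addf {n : ℕ} (v w : Fin n → F) :
    vecPoly q r n (fun i => v i + w i) = vecPoly q r n v + vecPoly q r n w := by
  unfold vecPoly
  rw [← Finset.sum_add_distrib]
  exact Finset.sum_congr rfl fun i _ => by rw [Polynomial.C_add, add_mul]

lemma vecPoly_smulf {n : ℕ} (c : F) (v : Fin n → F) :
    vecPoly q r n (fun i => c * v i) = C c * vecPoly q r n v := by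
  unfold vecPoly
  rw [Finset.mul_sum]
  exact Finset.sum_congr rfl fun i _ => by rw [Polynomial.C_mul, mul_assoc]

lemma vecPoly_zero (n : ℕ) : vecPoly q r n (fun _ => (0 : F)) = 0 := by
  unfold vecPoly; simp

lemma vecPoly_inj (hq2 : 2 ≤ q) (hr0 : 0 < r) {n : ℕ} {v w : Fin n → F}
    (h : vecPoly q r n v = vecPoly q r n w) : v = w := by
  funext i
  rw [← vecPoly_coeff hq2 hr0 v i, ← vecPoly_coeff hq2 hr0 w i, h]

lemma lin_small_eq_vecPoly (hq2 : 2 ≤ q) (hr0 : 0 < r) {n : ℕ} (hn : 0 < n) {P : Polynomial F}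
    (hP : IsLin q r P) (hdeg : P.natDegree < q ^ (r * n)) :
    P = vecPoly q r n (fun i : Fin n => P.coeff (q ^ (r * (i : ℕ)))) := by
  have hdeg' : P.natDegree ≤ q ^ (r * (n - 1)) := by
    by_cases hP0 : P = 0
    · simp [hP0]
    obtain ⟨j, hj⟩ := hP _ (Polynomial.natDegree_mem_support_of_nonzero hP0)
    have hjn : j < n := by
      by_contra hc
      have := (e_le_iff hq2 hr0).mpr (by omega : n ≤ j)
      omega
    rw [hj]
    exact (e_le_iff hq2 hr0).mpr (by omega)
  have h1 := lin_eq_sum_range hq2 hr0 hP hdeg'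
  have hs : n - 1 + 1 = n := by omega
  rw [hs] at h1
  conv_lhs => rw [h1]
  unfold vecPoly
  rw [Fin.sum_univ_eq_sum_range (fun i => C (P.coeff (q ^ (r * i))) * X ^ q ^ (r * i)) n]
  exact Finset.sum_congr rfl fun j _ => (Polynomial.C_mul_X_pow_eq_monomial).symm

section ModM

lemma M_natDegree (hq2 : 2 ≤ q) (hr0 : 0 < r) {n : ℕ} (hn : 0 < n) :
    (X ^ q ^ (r * n) - X : Polynomial F).natDegree = q ^ (r * n) := by
  have h1 : (1 : ℕ) < q ^ (r * n) := by
    have := e_strictMono (q := q) (r := r) hq2 hr0 (by omega : 0 < n)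
    simpa using this
  rw [Polynomial.natDegree_sub_eq_left_of_natDegree_lt, Polynomial.natDegree_X_pow]
  rw [Polynomial.natDegree_X, Polynomial.natDegree_X_pow]
  exact h1

lemma M_monic (hq2 : 2 ≤ q) (hr0 : 0 < r) {n : ℕ} (hn : 0 < n) :
    (X ^ q ^ (r * n) - X : Polynomial F).Monic := by
  apply Polynomial.monic_X_pow_sub
  rw [Polynomial.degree_X]
  exact_mod_cast Nat.one_lt_cast.mpr (show 1 < q ^ (r * n) by
    have := e_strictMono (q := q) (r := r) hq2 hr0 (by omega : 0 < n)
    simpa using this)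

lemma isLin_M (hq2 : 2 ≤ q) {n : ℕ} : IsLin q r (X ^ q ^ (r * n) - X : Polynomial F) :=
  isLin_sub (isLin_X_pow n) isLin_X

lemma classEq_refl {n : ℕ} (P : Polynomial F) : ClassEq q r n P P := by
  unfold ClassEq; simp

lemma classEq_symm {n : ℕ} {P Q : Polynomial F} (h : ClassEq q r n P Q) : ClassEq q r n Q P := by
  unfold ClassEq at *
  have := dvd_neg.mpr h
  rwa [neg_sub] at this

lemma classEq_trans {n : ℕ} {P Q R : Polynomial F} (h1 : ClassEq q r n P Q)
    (h2 : ClassEq q r n Q R) : ClassEq q r n P R := by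
  unfold ClassEq at *
  have := dvd_add h1 h2
  rwa [sub_add_sub_cancel] at this

lemma classEq_add {n : ℕ} {P Q P' Q' : Polynomial F} (h1 : ClassEq q r n P Q)
    (h2 : ClassEq q r n P' Q') : ClassEq q r n (P + P') (Q + Q') := by
  unfold ClassEq at *
  have := dvd_add h1 h2
  rwa [show P - Q + (P' - Q') = P + P' - (Q + Q') by ring] at this

lemma classEq_sub {n : ℕ} {P Q P' Q' : Polynomial F} (h1 : ClassEq q r n P Q)
    (h2 : ClassEq q r n P' Q') : ClassEq q r n (P - P') (Q - Q') := by
  unfold ClassEq at *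
  have := dvd_sub h1 h2
  rwa [show P - Q - (P' - Q') = P - P' - (Q - Q') by ring] at this

lemma classEq_C_mul {n : ℕ} (c : F) {P Q : Polynomial F} (h : ClassEq q r n P Q) :
    ClassEq q r n (C c * P) (C c * Q) := by
  unfold ClassEq at *
  rw [← mul_sub]
  exact Dvd.dvd.mul_left h _

lemma classEq_pow (hq2 : 2 ≤ q) (hfrP : ∀ a b : Polynomial F, (a + b) ^ q = a ^ q + b ^ q)
    {n : ℕ} {P Q : Polynomial F} (h : ClassEq q r n P Q) (k : ℕ) :
    ClassEq q r n (P ^ q ^ k) (Q ^ q ^ k) := by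
  unfold ClassEq at *
  rw [← frob_sub hfrP]
  exact dvd_trans h (dvd_pow_self _ (pow_ne_zero k (by omega : q ≠ 0)))

lemma classEq_eq_of_small (hq2 : 2 ≤ q) (hr0 : 0 < r) {n : ℕ} (hn : 0 < n)
    {P Q : Polynomial F} (h : ClassEq q r n P Q) (hP : P.natDegree < q ^ (r * n))
    (hQ : Q.natDegree < q ^ (r * n)) : P = Q := by
  have hd : (P - Q).natDegree < (X ^ q ^ (r * n) - X : Polynomial F).natDegree := by
    rw [M_natDegree hq2 hr0 hn]
    exact lt_of_le_of_lt (Polynomial.natDegree_sub_le P Q) (by omega)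
  have := Polynomial.eq_zero_of_dvd_of_natDegree_lt h hd
  exact sub_eq_zero.mp this

lemma comp_eq_sum (A P : Polynomial F) :
    A.comp P = ∑ i ∈ A.support, C (A.coeff i) * P ^ i := by
  conv_lhs => rw [Polynomial.as_sum_support A]
  rw [Polynomial.sum_comp]
  exact Finset.sum_congr rfl fun i _ => monomial_comp' _ _ _

lemma classEq_comp_left (hq2 : 2 ≤ q)
    (hfrP : ∀ a b : Polynomial F, (a + b) ^ q = a ^ q + b ^ q)
    {n : ℕ} {A P P' : Polynomial F} (hA : IsLin q r A) (h : ClassEq q r n P P') :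
    ClassEq q r n (A.comp P) (A.comp P') := by
  rw [ClassEq, comp_eq_sum A P, comp_eq_sum A P', ← Finset.sum_sub_distrib]
  apply Finset.dvd_sum
  intro i hi
  obtain ⟨j, hj⟩ := hA i hi
  rw [← mul_sub]
  apply Dvd.dvd.mul_left
  rw [hj]
  exact classEq_pow hq2 hfrP h (r * j)

lemma fin_zero_sub_one {n' : ℕ} : (0 - 1 : Fin (n' + 1)) = Fin.last n' := by
  cases n' with
  | zero => decide
  | succ m =>
    apply Fin.ext
    rw [Fin.sub_def]
    simp only [Fin.val_one', Fin.val_zero, add_zero, Fin.val_last]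
    rw [Nat.mod_eq_of_lt (show (1:ℕ) < m + 1 + 1 by omega)]
    rw [show m + 1 + 1 - 1 = m + 1 by omega]
    exact Nat.mod_eq_of_lt (by omega)

lemma fin_succ_sub_one {n' : ℕ} (i : Fin n') :
    ((i.succ : Fin (n' + 1)) - 1) = i.castSucc := by
  have hn : 0 < n' := i.pos
  apply Fin.ext
  rw [Fin.sub_def]
  simp only [Fin.val_one', Fin.val_succ, Fin.coe_castSucc]
  rw [Nat.mod_eq_of_lt (show (1:ℕ) < n' + 1 by omega)]
  rw [show n' + 1 - 1 + ((i:ℕ) + 1) = (i:ℕ) + (n' + 1) by omega, Nat.add_mod_right]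
  exact Nat.mod_eq_of_lt (by omega)

lemma fin_neg_one {n' : ℕ} : (-1 : Fin (n' + 1)) = Fin.last n' := by
  rw [← zero_sub]; exact fin_zero_sub_one

lemma vecPoly_pow_shift (hq2 : 2 ≤ q) (hr0 : 0 < r)
    (hfrP : ∀ a b : Polynomial F, (a + b) ^ q = a ^ q + b ^ q)
    {n : ℕ} [NeZero n] (v : Fin n → F) :
    ClassEq q r n ((vecPoly q r n v) ^ q ^ r)
      (vecPoly q r n (fun i => v (i - 1) ^ q ^ r)) := by
  obtain ⟨n', rfl⟩ : ∃ n', n = n' + 1 := ⟨n - 1, by have := NeZero.pos n; omega⟩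
  have hL : (vecPoly q r (n' + 1) v) ^ q ^ r
      = ∑ i : Fin (n' + 1), C (v i ^ q ^ r) * X ^ q ^ (r * ((i : ℕ) + 1)) := by
    unfold vecPoly
    rw [frob_sum hq2 hfrP]
    refine Finset.sum_congr rfl fun i _ => ?_
    rw [mul_pow, ← Polynomial.C_pow, ← pow_mul, ← pow_add]
    congr 2 <;> ring
  have hR : vecPoly q r (n' + 1) (fun i => v (i - 1) ^ q ^ r)
      = C (v (Fin.last n') ^ q ^ r) * X
        + ∑ i : Fin n', C (v i.castSucc ^ q ^ r) * X ^ q ^ (r * ((i : ℕ) + 1)) := by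
    unfold vecPoly
    rw [Fin.sum_univ_succ]
    congr 1
    · simp [fin_zero_sub_one, fin_neg_one]
    · exact Finset.sum_congr rfl fun i _ => by simp [fin_succ_sub_one]
  have hL2 : (vecPoly q r (n' + 1) v) ^ q ^ r
      = C (v (Fin.last n') ^ q ^ r) * X ^ q ^ (r * (n' + 1))
        + ∑ i : Fin n', C (v i.castSucc ^ q ^ r) * X ^ q ^ (r * ((i : ℕ) + 1)) := by
    rw [hL, Fin.sum_univ_castSucc, add_comm]
    simp
  rw [ClassEq, hL2, hR]
  refine ⟨C (v (Fin.last n') ^ q ^ r), ?_⟩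
  ring

end ModM


lemma isLin_natDegree_form (hq2 : 2 ≤ q) {P : Polynomial F} (hP : IsLin q r P) (h0 : P ≠ 0) :
    ∃ d, P.natDegree = q ^ (r * d) :=
  hP _ (Polynomial.natDegree_mem_support_of_nonzero h0)

theorem symDiv (hq2 : 2 ≤ q) (hr0 : 0 < r)
    (hfrP : ∀ a b : Polynomial F, (a + b) ^ q = a ^ q + b ^ q) :
    ∀ N (P G : Polynomial F), P.natDegree < N → IsLin q r P → IsLin q r G → G ≠ 0 →
    ∃ A R : Polynomial F, IsLin q r A ∧ IsLin q r R ∧ P = A.comp G + R ∧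
      R.natDegree < G.natDegree := by
  intro N
  induction N with
  | zero => intro P G h _ _ _; omega
  | succ N ih =>
    intro P G hPN hP hG hG0
    obtain ⟨d, hd⟩ := isLin_natDegree_form hq2 hG hG0
    have hGdeg1 : 1 ≤ G.natDegree := by rw [hd]; exact e_pos hq2 d
    by_cases hlt : P.natDegree < G.natDegree
    · exact ⟨0, P, isLin_zero, hP, by simp, hlt⟩
    push_neg at hlt
    have hP0 : P ≠ 0 := by
      intro h; rw [h] at hlt; simp at hlt; omega
    obtain ⟨s, hs⟩ := isLin_natDegree_form hq2 hP hP0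
    have hds : d ≤ s := (e_le_iff hq2 hr0).mp (by rw [← hd, ← hs]; exact hlt)
    set t := s - d with ht
    set c : F := P.leadingCoeff / (G.leadingCoeff ^ q ^ (r * t)) with hc
    have hlcG : G.leadingCoeff ≠ 0 := Polynomial.leadingCoeff_ne_zero.mpr hG0
    have hlcP : P.leadingCoeff ≠ 0 := Polynomial.leadingCoeff_ne_zero.mpr hP0
    have hc0 : c ≠ 0 := div_ne_zero hlcP (pow_ne_zero _ hlcG)
    set T : Polynomial F := C c * X ^ q ^ (r * t) with hT
    have hTlin : IsLin q r T := isLin_C_mul _ (isLin_X_pow t)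
    have hTdeg : T.natDegree = q ^ (r * t) := by
      rw [hT, Polynomial.natDegree_C_mul hc0, Polynomial.natDegree_X_pow]
    have hTGdeg : (T.comp G).natDegree = P.natDegree := by
      rw [Polynomial.natDegree_comp, hTdeg, hd, hs, e_mul]
      have hts : t + d = s := by omega
      rw [hts]
    have hGnd0 : G.natDegree ≠ 0 := by omega
    have hTlc : T.leadingCoeff = c := by
      rw [hT, Polynomial.leadingCoeff_mul, Polynomial.leadingCoeff_C,
        Polynomial.leadingCoeff_X_pow, mul_one]
    have hTGlc : (T.comp G).leadingCoeff = P.leadingCoeff := by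
      rw [Polynomial.leadingCoeff_comp hGnd0, hTlc, hTdeg, hc,
        div_mul_cancel₀ _ (pow_ne_zero _ hlcG)]
    set P' := P - T.comp G with hP'def
    by_cases hP'0 : P' = 0
    · refine ⟨T, 0, hTlin, isLin_zero, ?_, by rw [Polynomial.natDegree_zero]; omega⟩
      have : P = T.comp G := by
        have := sub_eq_zero.mp hP'0
        exact this
      rw [this, add_zero]
    · have hTG0 : T.comp G ≠ 0 := fun h => hlcP (by rw [← hTGlc, h, Polynomial.leadingCoeff_zero])
      have hdeglt : P'.natDegree < P.natDegree := by
        apply Polynomial.natDegree_lt_natDegree hP'0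
        apply Polynomial.degree_sub_lt _ hP0 hTGlc.symm
        rw [Polynomial.degree_eq_natDegree hP0, Polynomial.degree_eq_natDegree hTG0, hTGdeg]
      have hP'lin : IsLin q r P' := isLin_sub hP (isLin_comp hq2 hfrP hTlin hG)
      obtain ⟨A', R, hA', hR, hEq, hRdeg⟩ := ih P' G (by omega) hP'lin hG hG0
      refine ⟨T + A', R, isLin_add hTlin hA', hR, ?_, hRdeg⟩
      rw [Polynomial.add_comp]
      have : P = T.comp G + P' := by rw [hP'def]; ring
      rw [this, hEq]
      ring

theorem bezout (hq2 : 2 ≤ q) (hr0 : 0 < r)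
    (hfrP : ∀ a b : Polynomial F, (a + b) ^ q = a ^ q + b ^ q) :
    ∀ N (G1 G2 : Polynomial F), G2.natDegree < N → IsLin q r G1 → IsLin q r G2 → G2 ≠ 0 →
    ∃ E A B : Polynomial F, IsLin q r E ∧ IsLin q r A ∧ IsLin q r B ∧ E ≠ 0 ∧
      E = A.comp G1 + B.comp G2 ∧ SymDvdR q r E G1 ∧ SymDvdR q r E G2 := by
  intro N
  induction N with
  | zero => intro _ _ h _ _ _; omega
  | succ N ih =>
    intro G1 G2 hN h1 h2 h20
    obtain ⟨A, R, hA, hR, hEq, hRdeg⟩ :=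
      symDiv hq2 hr0 hfrP (G1.natDegree + 1) G1 G2 (by omega) h1 h2 h20
    by_cases hR0 : R = 0
    · refine ⟨G2, 0, X, h2, isLin_zero, isLin_X, h20, by simp, ⟨A, hA, ?_⟩,
        ⟨X, isLin_X, Polynomial.X_comp.symm⟩⟩
      rw [hEq, hR0, add_zero]
    · obtain ⟨E, A', B', hE, hA', hB', hE0, hBez, hDvd2, hDvdR⟩ :=
        ih G2 R (by omega) h2 hR hR0
      have hRe : R = G1 - A.comp G2 := by rw [hEq]; ring
      obtain ⟨K, hK, hKeq⟩ := hDvd2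
      obtain ⟨H, hH, hHeq⟩ := hDvdR
      refine ⟨E, B', A' - B'.comp A, hE,  hB',
        isLin_sub hA' (isLin_comp hq2 hfrP hB' hA), hE0, ?_, ?_, ⟨K, hK, hKeq⟩⟩
      · calc E = A'.comp G2 + B'.comp R := hBez
          _ = A'.comp G2 + (B'.comp G1 - B'.comp (A.comp G2)) := by
              rw [hRe, lin_comp_sub hfrP hB']
          _ = B'.comp G1 + (A' - B'.comp A).comp G2 := by
              rw [Polynomial.sub_comp, Polynomial.comp_assoc]; ring
      · refine ⟨A.comp K + H, isLin_add (isLin_comp hq2 hfrP hA hK) hH, ?_⟩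
        calc G1 = A.comp G2 + R := by rw [hEq]
          _ = A.comp (K.comp E) + H.comp E := by rw [← hKeq, ← hHeq]
          _ = (A.comp K + H).comp E := by rw [Polynomial.add_comp, Polynomial.comp_assoc]


section Code

lemma vecPoly_add' {n : ℕ} (v w : Fin n → F) :
    vecPoly q r n (v + w) = vecPoly q r n v + vecPoly q r n w := vecPoly_addf v w

lemma vecPoly_smul' {n : ℕ} (c : F) (v : Fin n → F) :
    vecPoly q r n (c • v) = C c * vecPoly q r n v := vecPoly_smulf c v

lemma vecPoly_zero' {n : ℕ} : vecPoly q r n (0 : Fin n → F) = 0 := vecPoly_zero n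

lemma memCx_of_classEq {n : ℕ} {S : Set (Fin n → F)} {P P' : Polynomial F}
    (h : ClassEq q r n P P') (hm : MemCx q r n S P') : MemCx q r n S P := by
  obtain ⟨v, hv, hcl⟩ := hm
  exact ⟨v, hv, classEq_trans h hcl⟩

lemma memCx_zero {n : ℕ} (C : Submodule F (Fin n → F)) :
    MemCx q r n (C : Set (Fin n → F)) 0 :=
  ⟨0, C.zero_mem, by rw [vecPoly_zero']; exact classEq_refl 0⟩

lemma memCx_add {n : ℕ} {C : Submodule F (Fin n → F)} {P P' : Polynomial F}
    (h1 : MemCx q r n (C : Set (Fin n → F)) P) (h2 : MemCx q r n (C : Set (Fin n → F)) P') :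
    MemCx q r n (C : Set (Fin n → F)) (P + P') := by
  obtain ⟨u, hu, hclu⟩ := h1
  obtain ⟨w, hw, hclw⟩ := h2
  exact ⟨u + w, C.add_mem hu hw, by rw [vecPoly_add']; exact classEq_add hclu hclw⟩

lemma memCx_sub {n : ℕ} {C : Submodule F (Fin n → F)} {P P' : Polynomial F}
    (h1 : MemCx q r n (C : Set (Fin n → F)) P) (h2 : MemCx q r n (C : Set (Fin n → F)) P') :
    MemCx q r n (C : Set (Fin n → F)) (P - P') := by
  obtain ⟨u, hu, hclu⟩ := h1
  obtain ⟨w, hw, hclw⟩ := h2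
  refine ⟨u - w, C.sub_mem hu hw, ?_⟩
  have : vecPoly q r n (u - w) = vecPoly q r n u - vecPoly q r n w := by
    have := vecPoly_add' (q := q) (r := r) (u - w) w
    rw [sub_add_cancel] at this
    rw [eq_sub_iff_add_eq, ← this]
  rw [this]
  exact classEq_sub hclu hclw

lemma memCx_C_mul {n : ℕ} {C : Submodule F (Fin n → F)} (c : F) {P : Polynomial F}
    (h : MemCx q r n (C : Set (Fin n → F)) P) :
    MemCx q r n (C : Set (Fin n → F)) (Polynomial.C c * P) := by
  obtain ⟨u, hu, hclu⟩ := h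
  exact ⟨c • u, C.smul_mem c hu, by rw [vecPoly_smul']; exact classEq_C_mul c hclu⟩

lemma memCx_frob (hq2 : 2 ≤ q) (hr0 : 0 < r)
    (hfrP : ∀ a b : Polynomial F, (a + b) ^ q = a ^ q + b ^ q)
    {n : ℕ} [NeZero n] {C : Submodule F (Fin n → F)}
    (hC : IsQrCyclic q r n (C : Set (Fin n → F))) {P : Polynomial F}
    (h : MemCx q r n (C : Set (Fin n → F)) P) :
    MemCx q r n (C : Set (Fin n → F)) (P ^ q ^ r) := by
  obtain ⟨v, hv, hcl⟩ := h
  refine ⟨fun i => v (i - 1) ^ q ^ r, hC v hv, ?_⟩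
  exact classEq_trans (classEq_pow hq2 hfrP hcl r) (vecPoly_pow_shift hq2 hr0 hfrP v)

lemma memCx_frob_iter (hq2 : 2 ≤ q) (hr0 : 0 < r)
    (hfrP : ∀ a b : Polynomial F, (a + b) ^ q = a ^ q + b ^ q)
    {n : ℕ} [NeZero n] {C : Submodule F (Fin n → F)}
    (hC : IsQrCyclic q r n (C : Set (Fin n → F))) {P : Polynomial F}
    (h : MemCx q r n (C : Set (Fin n → F)) P) (t : ℕ) :
    MemCx q r n (C : Set (Fin n → F)) (P ^ q ^ (r * t)) := by
  induction t with
  | zero => simpa using h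
  | succ t ih =>
      have he : P ^ q ^ (r * (t + 1)) = (P ^ q ^ (r * t)) ^ q ^ r := by
        rw [← pow_mul, ← pow_add]
        congr 1 <;> ring
      rw [he]
      exact memCx_frob hq2 hr0 hfrP hC ih

lemma memCx_comp_left (hq2 : 2 ≤ q) (hr0 : 0 < r)
    (hfrP : ∀ a b : Polynomial F, (a + b) ^ q = a ^ q + b ^ q)
    {n : ℕ} [NeZero n] {C : Submodule F (Fin n → F)}
    (hC : IsQrCyclic q r n (C : Set (Fin n → F))) {A P : Polynomial F}
    (hA : IsLin q r A) (h : MemCx q r n (C : Set (Fin n → F)) P) :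
    MemCx q r n (C : Set (Fin n → F)) (A.comp P) := by
  classical
  rw [comp_eq_sum]
  have key : ∀ s : Finset ℕ, (∀ i ∈ s, ∃ j, i = q ^ (r * j)) →
      MemCx q r n (C : Set (Fin n → F)) (∑ i ∈ s, Polynomial.C (A.coeff i) * P ^ i) := by
    intro s hs
    induction s using Finset.induction_on with
    | empty => simpa using memCx_zero C
    | @insert a s ha ih =>
        rw [Finset.sum_insert ha]
        obtain ⟨j, hj⟩ := hs a (Finset.mem_insert_self _ _)
        refine memCx_add ?_ (ih fun i hi => hs i (Finset.mem_insert_of_mem hi))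
        rw [hj]
        exact memCx_C_mul _ (memCx_frob_iter hq2 hr0 hfrP hC h j)
  exact key A.support hA

lemma minGen_reduce (hq2 : 2 ≤ q) {n : ℕ} {C : Submodule F (Fin n → F)}
    {G : Polynomial F} (hG : IsMinGen q r n (C : Set (Fin n → F)) G)
    {P : Polynomial F} (hm : MemCx q r n (C : Set (Fin n → F)) P) (hlin : IsLin q r P)
    (h0 : P ≠ 0) (hdeg : P.natDegree < G.natDegree) : False := by
  have hlc : P.leadingCoeff ≠ 0 := Polynomial.leadingCoeff_ne_zero.mpr h0
  have hmono := Polynomial.monic_mul_leadingCoeff_inv h0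
  have hdegeq : (P * Polynomial.C P.leadingCoeff⁻¹).natDegree = P.natDegree := by
    rw [Polynomial.natDegree_mul_C (inv_ne_zero hlc)]
  have hlin' : IsLin q r (P * Polynomial.C P.leadingCoeff⁻¹) := by
    rw [mul_comm]
    exact isLin_C_mul _ hlin
  have hmem' : MemCx q r n (C : Set (Fin n → F)) (P * Polynomial.C P.leadingCoeff⁻¹) := by
    rw [mul_comm]
    exact memCx_C_mul _ hm
  have := hG.2.2.2 _ hlin' hmono hmem'
  omega

lemma memCx_div (hq2 : 2 ≤ q) (hr0 : 0 < r)
    (hfrP : ∀ a b : Polynomial F, (a + b) ^ q = a ^ q + b ^ q)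
    {n : ℕ} [NeZero n] {C : Submodule F (Fin n → F)}
    (hC : IsQrCyclic q r n (C : Set (Fin n → F)))
    {G : Polynomial F} (hG : IsMinGen q r n (C : Set (Fin n → F)) G)
    {P : Polynomial F} (hm : MemCx q r n (C : Set (Fin n → F)) P) (hlin : IsLin q r P) :
    ∃ A, IsLin q r A ∧ P = A.comp G := by
  have hG0 : G ≠ 0 := hG.2.1.ne_zero
  obtain ⟨A, R, hA, hR, hEq, hRdeg⟩ :=
    symDiv hq2 hr0 hfrP (P.natDegree + 1) P G (by omega) hlin hG.1 hG0
  by_cases hR0 : R = 0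
  · exact ⟨A, hA, by rw [hEq, hR0, add_zero]⟩
  · exfalso
    have hRP : R = P - A.comp G := by rw [hEq]; ring
    have hmemR : MemCx q r n (C : Set (Fin n → F)) R := by
      rw [hRP]
      exact memCx_sub hm (memCx_comp_left hq2 hr0 hfrP hC hA hG.2.2.1)
    exact minGen_reduce hq2 hG hmemR hR hR0 hRdeg

lemma M_memCx {n : ℕ} (C : Submodule F (Fin n → F)) :
    MemCx q r n (C : Set (Fin n → F)) (X ^ q ^ (r * n) - X) := by
  refine ⟨0, C.zero_mem, ?_⟩
  rw [vecPoly_zero']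
  unfold ClassEq
  rw [sub_zero]

lemma minGen_deg_le (hq2 : 2 ≤ q) (hr0 : 0 < r) {n : ℕ} (hn : 0 < n)
    {C : Submodule F (Fin n → F)}
    {G : Polynomial F} (hG : IsMinGen q r n (C : Set (Fin n → F)) G) :
    G.natDegree ≤ q ^ (r * n) := by
  have := hG.2.2.2 _ (isLin_M hq2) (M_monic hq2 hr0 hn) (M_memCx C)
  rwa [M_natDegree hq2 hr0 hn] at this


theorem finrank_code (hq2 : 2 ≤ q) (hr0 : 0 < r)
    (hfrP : ∀ a b : Polynomial F, (a + b) ^ q = a ^ q + b ^ q)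
    {n : ℕ} [NeZero n] {C : Submodule F (Fin n → F)}
    (hC : IsQrCyclic q r n (C : Set (Fin n → F)))
    {G : Polynomial F} (hG : IsMinGen q r n (C : Set (Fin n → F)) G)
    {d : ℕ} (hd : G.natDegree = q ^ (r * d)) :
    d ≤ n ∧ Module.finrank F C = n - d := by
  classical
  have hn : 0 < n := NeZero.pos n
  have hdn : d ≤ n := by
    have h1 := minGen_deg_le hq2 hr0 hn hG
    rw [hd] at h1
    exact (e_le_iff hq2 hr0).mp h1
  refine ⟨hdn, ?_⟩
  set k := n - d with hk
  have hG0 : G ≠ 0 := hG.2.1.ne_zero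
  have hGnd : G.natDegree ≠ 0 := by
    have := e_pos (q := q) (r := r) hq2 d
    omega
  -- the linear map
  set f : (Fin k → F) → (Fin n → F) :=
    fun a i => ((vecPoly q r k a).comp G).coeff (q ^ (r * (i : ℕ))) with hf
  have hcomp_lin : ∀ a : Fin k → F, IsLin q r ((vecPoly q r k a).comp G) :=
    fun a => isLin_comp hq2 hfrP (isLin_vecPoly k a) hG.1
  have hcomp_deg : ∀ a : Fin k → F, ((vecPoly q r k a).comp G).natDegree < q ^ (r * n) := by
    intro a
    rcases Nat.eq_zero_or_pos k with hk0 | hkpos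
    · have hva : vecPoly q r k a = 0 := by
        unfold vecPoly
        exact Finset.sum_eq_zero fun i _ => absurd i.isLt (by omega)
      rw [hva, Polynomial.zero_comp, Polynomial.natDegree_zero]
      exact e_pos hq2 n
    · rw [Polynomial.natDegree_comp, hd]
      calc (vecPoly q r k a).natDegree * q ^ (r * d)
          ≤ q ^ (r * (k - 1)) * q ^ (r * d) :=
            Nat.mul_le_mul_right _ (vecPoly_natDegree_le hq2 hr0 hkpos a)
        _ = q ^ (r * (k - 1 + d)) := e_mul _ _
        _ < q ^ (r * n) := e_strictMono hq2 hr0 (by omega)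
  have hvec_eq : ∀ a : Fin k → F, vecPoly q r n (f a) = (vecPoly q r k a).comp G :=
    fun a => (lin_small_eq_vecPoly hq2 hr0 hn (hcomp_lin a) (hcomp_deg a)).symm
  have hadd : ∀ a b : Fin k → F, f (a + b) = f a + f b := by
    intro a b
    funext i
    simp only [hf, Pi.add_apply]
    rw [vecPoly_add', Polynomial.add_comp, Polynomial.coeff_add]
  have hsmul : ∀ (c : F) (a : Fin k → F), f (c • a) = c • f a := by
    intro c a
    funext i
    simp only [hf, Pi.smul_apply, smul_eq_mul]
    rw [vecPoly_smul', Polynomial.mul_comp, Polynomial.C_comp, Polynomial.coeff_C_mul]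
  set Phi : (Fin k → F) →ₗ[F] (Fin n → F) :=
    { toFun := f, map_add' := hadd, map_smul' := hsmul } with hPhi
  have hPhi_apply : ∀ a, Phi a = f a := fun a => rfl
  -- injectivity
  have hinj : Function.Injective Phi := by
    rw [← LinearMap.ker_eq_bot]
    rw [eq_bot_iff]
    intro a ha
    simp only [LinearMap.mem_ker] at ha
    have h0 : vecPoly q r n (f a) = 0 := by
      rw [show f a = (0 : Fin n → F) from ha, vecPoly_zero']
    rw [hvec_eq a] at h0
    have hA0 : vecPoly q r k a = 0 := by
      rcases (Polynomial.comp_eq_zero_iff).mp h0 with h | ⟨_, hGC⟩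
      · exact h
      · exfalso
        apply hGnd
        rw [hGC]
        exact Polynomial.natDegree_C _
    have : a = 0 := by
      apply vecPoly_inj hq2 hr0 (w := (0 : Fin k → F))
      rw [hA0, vecPoly_zero']
    simpa [this]
  -- range = C
  have hrange : LinearMap.range Phi = C := by
    apply le_antisymm
    · rintro v ⟨a, rfl⟩
      obtain ⟨w, hw, hcl⟩ := memCx_comp_left hq2 hr0 hfrP hC (isLin_vecPoly k a) hG.2.2.1
      have heq : (vecPoly q r k a).comp G = vecPoly q r n w :=
        classEq_eq_of_small hq2 hr0 hn hcl (hcomp_deg a) (vecPoly_natDegree_lt hq2 hr0 hn w)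
      have : vecPoly q r n (f a) = vecPoly q r n w := by rw [hvec_eq a, heq]
      have := vecPoly_inj hq2 hr0 this
      rw [hPhi_apply, this]
      exact hw
    · intro v hv
      obtain ⟨A, hA, hAeq⟩ := memCx_div hq2 hr0 hfrP hC hG
        (⟨v, hv, classEq_refl _⟩) (isLin_vecPoly n v)
      by_cases hA0 : A.comp G = 0
      · have : vecPoly q r n v = vecPoly q r n (0 : Fin n → F) := by
          rw [hAeq, hA0, vecPoly_zero']
        rw [vecPoly_inj hq2 hr0 this]
        exact Submodule.zero_mem _
      · have hAne : A ≠ 0 := by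
          intro h
          rw [h, Polynomial.zero_comp] at hA0
          exact hA0 rfl
        obtain ⟨s, hs⟩ := isLin_natDegree_form hq2 hA hAne
        have hdegv : (A.comp G).natDegree ≤ q ^ (r * (n - 1)) := by
          rw [← hAeq]
          exact vecPoly_natDegree_le hq2 hr0 hn v
        have hsd : s + d ≤ n - 1 := by
          rw [Polynomial.natDegree_comp, hs, hd, e_mul] at hdegv
          exact (e_le_iff hq2 hr0).mp hdegv
        have hkpos : 0 < k := by omega
        have hAdeg : A.natDegree < q ^ (r * k) := by
          rw [hs]
          exact e_strictMono hq2 hr0 (by omega)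
        have hArep := lin_small_eq_vecPoly hq2 hr0 hkpos hA hAdeg
        set a : Fin k → F := fun i => A.coeff (q ^ (r * (i : ℕ))) with ha
        refine ⟨a, ?_⟩
        rw [hPhi_apply]
        funext i
        rw [hf]
        show ((vecPoly q r k a).comp G).coeff (q ^ (r * (i : ℕ))) = v i
        rw [← hArep, ← hAeq]
        exact vecPoly_coeff hq2 hr0 v i
  have h1 : Module.finrank F (LinearMap.range Phi) = Module.finrank F (Fin k → F) :=
    LinearMap.finrank_range_of_inj hinj
  rw [hrange] at h1
  rw [h1, Module.finrank_pi, Fintype.card_fin]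


lemma vecPoly_e0 (hq2 : 2 ≤ q) (hr0 : 0 < r) {n : ℕ} [NeZero n] :
    vecPoly q r n (fun i : Fin n => if (0 : Fin n) = i then (1 : F) else 0) = X := by
  unfold vecPoly
  rw [Finset.sum_eq_single (0 : Fin n)]
  · simp
  · intro b _ hb
    have hb' : ¬((0 : Fin n) = b) := fun h => hb h.symm
    simp [hb']
  · intro h; exact absurd (Finset.mem_univ _) h

lemma basis_mem_of_shift (hq0 : 0 < q) {n : ℕ} [NeZero n] {S : Submodule F (Fin n → F)}
    (hshift : ∀ x ∈ S, (fun i : Fin n => x (i - 1) ^ q ^ r) ∈ S)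
    (h0 : (fun i : Fin n => if (0 : Fin n) = i then (1 : F) else 0) ∈ S) :
    S = ⊤ := by
  classical
  have hqr0 : q ^ r ≠ 0 := pow_ne_zero r (by omega)
  have key : ∀ (m : ℕ) (hm : m < n),
      (fun i : Fin n => if (⟨m, hm⟩ : Fin n) = i then (1 : F) else 0) ∈ S := by
    intro m
    induction m with
    | zero =>
        intro hm
        have h00 : (⟨0, hm⟩ : Fin n) = 0 := by apply Fin.ext; simp
        rw [h00]
        exact h0
    | succ m ih =>
        intro hm
        have hm' : m < n := by omega
        have hmem := hshift _ (ih hm')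
        have hadd1 : (⟨m, hm'⟩ : Fin n) + 1 = ⟨m + 1, hm⟩ := by
          apply Fin.ext
          rw [Fin.add_def]
          simp only [Fin.val_one']
          rw [Nat.mod_eq_of_lt (show (1 : ℕ) < n by omega)]
          exact Nat.mod_eq_of_lt (by omega)
        have heq : (fun i : Fin n =>
            (if (⟨m, hm'⟩ : Fin n) = i - 1 then (1 : F) else 0) ^ q ^ r)
            = fun i : Fin n => if (⟨m + 1, hm⟩ : Fin n) = i then (1 : F) else 0 := by
          funext i
          by_cases h : (⟨m, hm'⟩ : Fin n) = i - 1
          · rw [if_pos h, one_pow, if_pos]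
            rw [← hadd1]
            exact (sub_eq_iff_eq_add.mp h.symm).symm
          · rw [if_neg h, zero_pow hqr0, if_neg]
            intro hc
            apply h
            rw [← hc, ← hadd1, add_sub_cancel_right]
        rw [← heq]
        exact hmem
  rw [eq_top_iff]
  intro v _
  rw [pi_eq_sum_univ v]
  refine Submodule.sum_mem _ fun j _ => Submodule.smul_mem _ _ ?_
  exact key j.1 j.2

end Code

end S10

/-- `F_{q^m}`-linear `q^r`-cyclic codes `C₁, C₂` with minimal
generators `G₁, G₂` are complementary (`F_{q^m}^n = C₁ ⊕ C₂`) iff `G₁` and `G₂` are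
coprime on the right (every common right symbolic divisor has `q^r`-degree `0`, i.e.
ordinary degree `≤ 1`) and `deg_{q^r} G₁ + deg_{q^r} G₂ = n`. -/
theorem statement10
    (q m n r : ℕ) (hq : IsPrimePow q) (hm : 0 < m) (hr : 0 < r) [NeZero n]
    (hmn : m ∣ r * n)
    (Fqm : Type*) [Field Fqm] [Fintype Fqm]
    (hcardm : Fintype.card Fqm = q ^ m)
    (C1 C2 : Submodule Fqm (Fin n → Fqm))
    (hC1 : IsQrCyclic q r n (C1 : Set (Fin n → Fqm)))
    (hC2 : IsQrCyclic q r n (C2 : Set (Fin n → Fqm)))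
    (G1 G2 : Polynomial Fqm)
    (hG1 : IsMinGen q r n (C1 : Set (Fin n → Fqm)) G1)
    (hG2 : IsMinGen q r n (C2 : Set (Fin n → Fqm)) G2) :
    (C1 ⊓ C2 = ⊥ ∧ C1 ⊔ C2 = ⊤) ↔
      ((∀ E : Polynomial Fqm, IsLin q r E → SymDvdR q r E G1 → SymDvdR q r E G2 →
          E.natDegree ≤ 1) ∧
        ∃ d1 d2 : ℕ, G1.natDegree = q ^ (r * d1) ∧ G2.natDegree = q ^ (r * d2) ∧
          d1 + d2 = n) := by
  classical
  open Polynomial in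
  have hq2 : 2 ≤ q := hq.two_le
  obtain ⟨p, e, hp, he, hpe⟩ := hq
  have hpp : p.Prime := Nat.prime_iff.mpr hp
  haveI hchar : CharP Fqm p := by
    have hinst := ringChar.charP Fqm
    obtain ⟨k, hkp, hcard'⟩ := FiniteField.card Fqm (ringChar Fqm)
    have hdvd : ringChar Fqm ∣ p ^ (e * m) := by
      have h1 : ringChar Fqm ∣ (ringChar Fqm) ^ (k : ℕ) :=
        dvd_pow_self _ (by exact_mod_cast k.ne_zero)
      rwa [← hcard', hcardm, ← hpe, ← pow_mul] at h1
    have : ringChar Fqm = p :=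
      (Nat.prime_dvd_prime_iff_eq hkp hpp).mp (hkp.dvd_of_dvd_pow hdvd)
    rw [← this]
    exact hinst
  haveI : Fact p.Prime := ⟨hpp⟩
  have hfrP : ∀ a b : Polynomial Fqm, (a + b) ^ q = a ^ q + b ^ q := by
    intro a b; rw [← hpe]; exact add_pow_char_pow a b p e
  have hfrF : ∀ a b : Fqm, (a + b) ^ q = a ^ q + b ^ q := by
    intro a b; rw [← hpe]; exact add_pow_char_pow a b p e
  have hn : 0 < n := NeZero.pos n
  have hG10 : G1 ≠ 0 := hG1.2.1.ne_zero
  have hG20 : G2 ≠ 0 := hG2.2.1.ne_zero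
  obtain ⟨d1, hd1⟩ := S10.isLin_natDegree_form hq2 hG1.1 hG10
  obtain ⟨d2, hd2⟩ := S10.isLin_natDegree_form hq2 hG2.1 hG20
  obtain ⟨hd1n, hfr1⟩ := S10.finrank_code hq2 hr hfrP hC1 hG1 hd1
  obtain ⟨hd2n, hfr2⟩ := S10.finrank_code hq2 hr hfrP hC2 hG2 hd2
  have hfrtop : Module.finrank Fqm (Fin n → Fqm) = n := by
    rw [Module.finrank_pi, Fintype.card_fin]
  have hshift : ∀ x ∈ C1 ⊔ C2, (fun i : Fin n => x (i - 1) ^ q ^ r) ∈ C1 ⊔ C2 := by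
    intro x hx
    obtain ⟨u, hu, w, hw, rfl⟩ := Submodule.mem_sup.mp hx
    refine Submodule.mem_sup.mpr ⟨_, hC1 u hu, _, hC2 w hw, ?_⟩
    funext i
    show u (i - 1) ^ q ^ r + w (i - 1) ^ q ^ r = (u + w) (i - 1) ^ q ^ r
    rw [Pi.add_apply]
    exact (S10.frob_pow hfrF r (u (i - 1)) (w (i - 1))).symm
  constructor
  · rintro ⟨hinf, hsup⟩
    constructor
    · intro E hE hdv1 hdv2
      obtain ⟨Q1, hQ1, hQ1e⟩ := hdv1
      obtain ⟨Q2, hQ2, hQ2e⟩ := hdv2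
      have he0 : (fun i : Fin n => if (0 : Fin n) = i then (1 : Fqm) else 0) ∈ C1 ⊔ C2 := by
        rw [hsup]; trivial
      obtain ⟨u, hu, w, hw, huw⟩ := Submodule.mem_sup.mp he0
      obtain ⟨A1, hA1, hA1e⟩ := S10.memCx_div hq2 hr hfrP hC1 hG1
        ⟨u, hu, S10.classEq_refl _⟩ (S10.isLin_vecPoly n u)
      obtain ⟨A2, hA2, hA2e⟩ := S10.memCx_div hq2 hr hfrP hC2 hG2
        ⟨w, hw, S10.classEq_refl _⟩ (S10.isLin_vecPoly n w)
      have hX : (Polynomial.X : Polynomial Fqm)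
          = ((A1.comp Q1) + (A2.comp Q2)).comp E := by
        calc (Polynomial.X : Polynomial Fqm)
            = vecPoly q r n (fun i => if (0 : Fin n) = i then 1 else 0) :=
              (S10.vecPoly_e0 hq2 hr).symm
          _ = vecPoly q r n (u + w) := by rw [← huw]
          _ = vecPoly q r n u + vecPoly q r n w := S10.vecPoly_add' u w
          _ = A1.comp G1 + A2.comp G2 := by rw [hA1e, hA2e]
          _ = (A1.comp Q1).comp E + (A2.comp Q2).comp E := by
              rw [hQ1e, hQ2e, Polynomial.comp_assoc, Polynomial.comp_assoc]
          _ = ((A1.comp Q1) + (A2.comp Q2)).comp E := (Polynomial.add_comp).symm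
      have hdeg := congrArg Polynomial.natDegree hX
      rw [Polynomial.natDegree_X, Polynomial.natDegree_comp] at hdeg
      exact Nat.le_of_dvd one_pos ⟨_, by rw [hdeg]; ring⟩
    · refine ⟨d1, d2, hd1, hd2, ?_⟩
      have hsum := Submodule.finrank_sup_add_finrank_inf_eq C1 C2
      rw [hinf, hsup, hfr1, hfr2, finrank_top, hfrtop, finrank_bot] at hsum
      omega
  · rintro ⟨hcop, d1', d2', hd1', hd2', hsumd⟩
    have hd1e : d1' = d1 := S10.e_inj hq2 hr (hd1'.symm.trans hd1)
    have hd2e : d2' = d2 := S10.e_inj hq2 hr (hd2'.symm.trans hd2)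
    subst hd1e; subst hd2e
    obtain ⟨E, A, B, hE, hA, hB, hE0, hBez, hdv1, hdv2⟩ :=
      S10.bezout hq2 hr hfrP (G2.natDegree + 1) G1 G2 (by omega) hG1.1 hG2.1 hG20
    have hEdeg : E.natDegree ≤ 1 := hcop E hE hdv1 hdv2
    have hE1 : E.natDegree ≤ q ^ (r * 0) := by simpa using hEdeg
    have hErep := S10.lin_eq_sum_range hq2 hr hE hE1
    rw [Finset.sum_range_one, show q ^ (r * 0) = 1 by simp] at hErep
    set c := E.coeff 1 with hc
    have hc0 : c ≠ 0 := by
      intro h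
      apply hE0
      rw [hErep, h, Polynomial.monomial_zero_right]
    have hmon : (Polynomial.monomial 1 c : Polynomial Fqm) = Polynomial.C c * Polynomial.X := by
      rw [← Polynomial.C_mul_X_pow_eq_monomial, pow_one]
    have hXeq : (Polynomial.X : Polynomial Fqm)
        = (Polynomial.C c⁻¹ * A).comp G1 + (Polynomial.C c⁻¹ * B).comp G2 := by
      rw [Polynomial.mul_comp, Polynomial.mul_comp, Polynomial.C_comp, Polynomial.C_comp,
        ← mul_add, ← hBez, hErep, hmon, ← mul_assoc, ← Polynomial.C_mul,
        inv_mul_cancel₀ hc0, Polynomial.C_1, one_mul]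
    obtain ⟨u, hu, hclu⟩ := S10.memCx_comp_left hq2 hr hfrP hC1
      (S10.isLin_C_mul c⁻¹ hA) hG1.2.2.1
    obtain ⟨w, hw, hclw⟩ := S10.memCx_comp_left hq2 hr hfrP hC2
      (S10.isLin_C_mul c⁻¹ hB) hG2.2.2.1
    have hclX : ClassEq q r n (Polynomial.X) (vecPoly q r n (u + w)) := by
      rw [S10.vecPoly_add', hXeq]
      exact S10.classEq_add hclu hclw
    have hXsmall : (Polynomial.X : Polynomial Fqm).natDegree < q ^ (r * n) := by
      rw [Polynomial.natDegree_X]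
      have := S10.e_strictMono (q := q) (r := r) hq2 hr (show 0 < n by omega)
      simpa using this
    have hXveceq := S10.classEq_eq_of_small hq2 hr hn hclX hXsmall
      (S10.vecPoly_natDegree_lt hq2 hr hn (u + w))
    have hvv : vecPoly q r n (fun i : Fin n => if (0 : Fin n) = i then (1 : Fqm) else 0)
        = vecPoly q r n (u + w) := by
      rw [S10.vecPoly_e0 hq2 hr]
      exact hXveceq
    have he0mem : (fun i : Fin n => if (0 : Fin n) = i then (1 : Fqm) else 0) ∈ C1 ⊔ C2 := by
      rw [S10.vecPoly_inj hq2 hr hvv]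
      exact Submodule.mem_sup.mpr ⟨u, hu, w, hw, rfl⟩
    have hsup : C1 ⊔ C2 = ⊤ := S10.basis_mem_of_shift (by omega) hshift he0mem
    refine ⟨?_, hsup⟩
    have hsum := Submodule.finrank_sup_add_finrank_inf_eq C1 C2
    rw [hsup, finrank_top, hfrtop, hfr1, hfr2] at hsum
    have h0 : Module.finrank Fqm (C1 ⊓ C2 : Submodule Fqm (Fin n → Fqm)) = 0 := by omega
    exact Submodule.finrank_eq_zero.mp h0
end

section
/- (Rank-shift bound.) Let F ∈ L be nonzero with root space S = Z(F) = { β ∈ F_{q^{rn}} : F(β) = 0 }. If I ⊆ F_{q^{rn}} is an F_{q^r}-linear subspace that is independent with respect to S, then wt_R(F) ≥ dim_{F_{q^r}}(I). -/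
/-- A sequence of `F_{q^r}`-subspaces of `F_{q^{rn}}` independent with respect to a set
`S`: it starts with `{0}`, and each new space is either a previous space `J ⊆ S`
enlarged by one vector `β ∉ S`, or the image of a previous space under `x ↦ x^{q^{br}}`.
`IndepSub … I` says `I` occurs in such a sequence. -/
inductive IndepSub (q r : ℕ) (Fqr K : Type*) [Field Fqr] [Field K] [Algebra Fqr K]
    (S : Set K) : Submodule Fqr K → Prop
  | zero : IndepSub q r Fqr K S ⊥
  | ext : ∀ (J : Submodule Fqr K) (β : K), IndepSub q r Fqr K S J → (J : Set K) ⊆ S →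
      β ∉ S → IndepSub q r Fqr K S (J ⊔ Submodule.span Fqr {β})
  | frob : ∀ (J : Submodule Fqr K) (b : ℕ), IndepSub q r Fqr K S J →
      IndepSub q r Fqr K S (Submodule.span Fqr ((fun x : K => x ^ q ^ (b * r)) '' ↑J))

section Aux14

/-- Rank of a span does not drop under an injective semilinear (w.r.t. a ring
equivalence) additive map. -/
lemma auxSpanRankLe {K V : Type*} [Field K] [AddCommGroup V] [Module K V]
    [Finite V] (σ : K ≃+* K) (Θ : V →+ V) (hΘ : Function.Injective Θ)
    (hc : ∀ (c : K) (x : V), Θ (c • x) = σ c • Θ x) (Y : Set V) :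
    Module.finrank K (Submodule.span K Y) ≤ Module.finrank K (Submodule.span K (Θ '' Y)) := by
  classical
  obtain ⟨t, htY, hsp, hli⟩ := exists_linearIndependent K Y
  haveI : Fintype t := (Set.toFinite t).fintype
  have hli2 : LinearIndependent K (⇑Θ ∘ ((↑) : t → V)) := by
    refine hli.map_of_injective_injective (σ.symm : K → K) Θ
      (fun r h => by simpa using congrArg σ h)
      (fun m h => hΘ (by simpa using h)) (fun r m => ?_)
    rw [hc, RingEquiv.apply_symm_apply]
  have hsub : Set.range (⇑Θ ∘ ((↑) : t → V)) ⊆ (Submodule.span K (Θ '' Y) : Set V) := by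
    rintro x ⟨⟨y, hy⟩, rfl⟩
    exact Submodule.subset_span ⟨y, htY hy, rfl⟩
  have hli3 : LinearIndependent K
      (fun x : t => (⟨Θ x, hsub ⟨x, rfl⟩⟩ : Submodule.span K (Θ '' Y))) :=
    hli2.of_comp (Submodule.span K (Θ '' Y)).subtype
  have hcard := hli3.fintype_card_le_finrank
  have hY : Module.finrank K (Submodule.span K Y) = Fintype.card t := by
    rw [← hsp, finrank_span_set_eq_card hli, Set.toFinset_card]
  omega

/-- The key induction for the rank-shift bound: along an independent sequence, the
`Fqr`-dimension of each subspace is bounded by the `K`-rank of its image under `Ψ`. -/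
lemma auxKey {q r : ℕ} {Fqr K : Type*} [Field Fqr] [Field K] [Algebra Fqr K]
    [Finite K] {w : ℕ} (S : Set K)
    (Ψ : K → Fin w → K) (φ : (Fin w → K) →ₗ[K] K)
    (hS0 : ∀ γ ∈ S, φ (Ψ γ) = 0) (hS1 : ∀ β : K, β ∉ S → φ (Ψ β) ≠ 0)
    (hfr : ∀ b : ℕ, ∃ (fr : K →ₗ[Fqr] K) (Θ : (Fin w → K) →+ (Fin w → K)) (σ : K ≃+* K),
        (∀ x : K, fr x = x ^ q ^ (b * r)) ∧ Function.Injective Θ ∧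
        (∀ (c : K) (x : Fin w → K), Θ (c • x) = σ c • Θ x) ∧
        (∀ β : K, Ψ (β ^ q ^ (b * r)) = Θ (Ψ β)))
    (I : Submodule Fqr K) (hI : IndepSub q r Fqr K S I) :
    Module.finrank Fqr ↥I ≤ Module.finrank K (Submodule.span K (Ψ '' ↑I)) := by
  classical
  induction hI with
  | zero => simp
  | ext J β hJ hJS hβ ih =>
    have h1 : Module.finrank Fqr ↥(J ⊔ Submodule.span Fqr {β}) ≤ Module.finrank Fqr ↥J + 1 := by
      refine (Submodule.finrank_add_le_finrank_add_finrank J _).trans ?_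
      have h2 : Module.finrank Fqr ↥(Submodule.span Fqr ({β} : Set K)) ≤ 1 := by
        simpa using finrank_span_le_card ({β} : Set K)
      omega
    have hker : Submodule.span K (Ψ '' ↑J) ≤ LinearMap.ker φ := by
      rw [Submodule.span_le]
      rintro x ⟨γ, hγ, rfl⟩
      exact LinearMap.mem_ker.2 (hS0 γ (hJS hγ))
    have hβJ : β ∈ J ⊔ Submodule.span Fqr {β} :=
      (le_sup_right : Submodule.span Fqr {β} ≤ _) (Submodule.mem_span_singleton_self β)
    have hmemT : Ψ β ∈ Submodule.span K (Ψ '' ↑(J ⊔ Submodule.span Fqr {β})) :=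
      Submodule.subset_span ⟨β, hβJ, rfl⟩
    have hnot : Ψ β ∉ Submodule.span K (Ψ '' ↑J) := fun hmem =>
      hS1 β hβ (LinearMap.mem_ker.1 (hker hmem))
    have hlt : Submodule.span K (Ψ '' ↑J)
        < Submodule.span K (Ψ '' ↑(J ⊔ Submodule.span Fqr {β})) := by
      refine lt_of_le_of_ne
        (Submodule.span_mono (Set.image_mono (SetLike.coe_subset_coe.2 le_sup_left)))
        fun he => hnot ?_
      rw [he]; exact hmemT
    have h3 := Submodule.finrank_lt_finrank_of_lt hlt
    omega
  | frob J b hJ ih =>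
    obtain ⟨fr, Θ, σ, hfr_eq, hΘinj, hΘc, hΨΘ⟩ := hfr b
    have hfun : (fun x : K => x ^ q ^ (b * r)) = ⇑fr := funext fun x => (hfr_eq x).symm
    have hIm : Submodule.span Fqr ((fun x : K => x ^ q ^ (b * r)) '' ↑J)
        = Submodule.map fr J := by
      rw [hfun, Submodule.span_image, Submodule.span_eq]
    rw [hIm]
    have hle1 : Module.finrank Fqr ↥(Submodule.map fr J) ≤ Module.finrank Fqr ↥J :=
      Submodule.finrank_map_le fr J
    have himg : Ψ '' ↑(Submodule.map fr J) = ⇑Θ '' (Ψ '' ↑J) := by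
      rw [Submodule.map_coe, ← hfun, Set.image_image, Set.image_image]
      exact Set.image_congr' fun γ => hΨΘ γ
    have hle2 := auxSpanRankLe σ Θ hΘinj hΘc (Ψ '' ↑J)
    rw [himg]
    exact hle1.trans (ih.trans hle2)

end Aux14


/-- **rank-shift bound.** Let `F ∈ L` be nonzero (given by its vector of
coefficients `v`) with root space `S = Z(F)`. If `I ⊆ F_{q^{rn}}` is an
`F_{q^r}`-subspace independent with respect to `S`, then `wt_R(F) ≥ dim_{F_{q^r}} I`. -/
theorem statement14
    (q m n r : ℕ) (hq : IsPrimePow q) (hm : 0 < m) (hr : 0 < r) [NeZero n]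
    (hmn : m ∣ r * n)
    (Fq Fqm Fqr K : Type*) [Field Fq] [Fintype Fq] [Field Fqm] [Fintype Fqm]
    [Field Fqr] [Fintype Fqr] [Field K] [Fintype K]
    [Algebra Fq Fqm] [Algebra Fqm K] [Algebra Fqr K]
    (hcardq : Fintype.card Fq = q) (hcardm : Fintype.card Fqm = q ^ m)
    (hcardr : Fintype.card Fqr = q ^ r) (hcardK : Fintype.card K = q ^ (r * n))
    (v : Fin n → Fqm) (hv : v ≠ 0)
    (S : Set K) (hS : S = ZSet K (vecPoly q r n v))
    (I : Submodule Fqr K) (hI : IndepSub q r Fqr K S I) :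
    Module.finrank Fqr ↥I ≤ Module.finrank Fq ↥(Submodule.span Fq (Set.range v)) := by
  
  classical
  obtain ⟨p, e, hpp, he, hq'⟩ := hq
  have hp' : p.Prime := Nat.prime_iff.mpr hpp
  haveI : Fact p.Prime := ⟨hp'⟩
  have hq0 : q ≠ 0 := by
    have h2 := hp'.two_le
    have : 0 < p ^ e := pow_pos (by omega) e
    omega
  have hn0 : 0 < n := Nat.pos_of_ne_zero (NeZero.ne n)
  haveI hcharK : CharP K p := by
    haveI h1 : CharP K (ringChar K) := ringChar.charP K
    obtain ⟨n', hprime', hcard'⟩ := FiniteField.card K (ringChar K)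
    have heq : p ^ (e * (r * n)) = (ringChar K) ^ (n' : ℕ) := by
      rw [pow_mul, hq', ← hcardK, hcard']
    have hpos : e * (r * n) ≠ 0 := by
      have := Nat.mul_pos he (Nat.mul_pos hr hn0)
      omega
    have hdvd : p ∣ (ringChar K) ^ (n' : ℕ) := heq ▸ dvd_pow_self p hpos
    have hpe : p = ringChar K :=
      (Nat.prime_dvd_prime_iff_eq hp' hprime').1 (hp'.dvd_of_dvd_pow hdvd)
    rwa [hpe]
  have hadd : ∀ (t : ℕ) (x y : K), (x + y) ^ q ^ t = x ^ q ^ t + y ^ q ^ t := by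
    intro t x y
    rw [← hq', ← pow_mul]
    exact add_pow_char_pow x y p (e * t)
  have hq0' : ∀ t : ℕ, q ^ t ≠ 0 := fun t => pow_ne_zero t hq0
  -- basis of the span of the coefficients
  set W := Submodule.span Fq (Set.range v) with hW
  let w : ℕ := Module.finrank Fq ↥W
  let bW : Module.Basis (Fin w) Fq ↥W := Module.finBasis Fq ↥W
  have hmemW : ∀ k, v k ∈ W := fun k => Submodule.subset_span ⟨k, rfl⟩
  let cf : Fin w → Fin n → Fq := fun t k => bW.repr ⟨v k, hmemW k⟩ t
  let av : Fin w → Fqm := fun t => (bW t : Fqm)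
  have hvk : ∀ k, v k = ∑ t, algebraMap Fq Fqm (cf t k) * av t := by
    intro k
    have h1 := congrArg Subtype.val (bW.sum_repr ⟨v k, hmemW k⟩)
    simp only [AddSubmonoidClass.coe_finset_sum, SetLike.val_smul, Algebra.smul_def] at h1
    exact h1.symm
  let ιm : Fqm →+* K := algebraMap Fqm K
  let ι : Fq →+* K := ιm.comp (algebraMap Fq Fqm)
  let Ψ : K → Fin w → K := fun β t => ∑ k : Fin n, ι (cf t k) * β ^ q ^ (r * (k : ℕ))
  let φ : (Fin w → K) →ₗ[K] K :=
    { toFun := fun x => ∑ t, ιm (av t) * x t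
      map_add' := fun x y => by simp [mul_add, Finset.sum_add_distrib]
      map_smul' := fun c x => by simp [Finset.mul_sum, smul_eq_mul, mul_left_comm] }
  have haev : ∀ β : K, Polynomial.aeval β (vecPoly q r n v)
      = ∑ k : Fin n, ιm (v k) * β ^ q ^ (r * (k : ℕ)) := by
    intro β
    simp [vecPoly, map_sum, map_mul, map_pow, Polynomial.aeval_C, Polynomial.aeval_X]
    rfl
  have hφΨ : ∀ β : K, φ (Ψ β) = Polynomial.aeval β (vecPoly q r n v) := by
    intro β
    rw [haev]
    have hterm : ∀ k : Fin n, ιm (v k) = ∑ t, ιm (av t) * ι (cf t k) := by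
      intro k
      rw [hvk k, map_sum]
      exact Finset.sum_congr rfl fun t _ => by rw [map_mul, mul_comm]; rfl
    have lhs_eq : φ (Ψ β) = ∑ t, ∑ k : Fin n, ιm (av t) * ι (cf t k) * β ^ q ^ (r * (k : ℕ)) := by
      show (∑ t, ιm (av t) * (∑ k : Fin n, ι (cf t k) * β ^ q ^ (r * (k : ℕ)))) = _
      exact Finset.sum_congr rfl fun t _ => by
        rw [Finset.mul_sum]
        exact Finset.sum_congr rfl fun k _ => (mul_assoc _ _ _).symm
    rw [lhs_eq, Finset.sum_comm]
    exact Finset.sum_congr rfl fun k _ => by rw [hterm k, Finset.sum_mul]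
  have hιfix : ∀ (x : Fq) (t : ℕ), ι x ^ q ^ t = ι x := by
    intro x t
    rw [← map_pow]
    congr 1
    rw [← hcardq]
    exact FiniteField.pow_card_pow t x
  have hrfix : ∀ (x : Fqr) (b : ℕ), (algebraMap Fqr K x) ^ q ^ (b * r) = algebraMap Fqr K x := by
    intro x b
    rw [← map_pow]
    congr 1
    rw [mul_comm b r, pow_mul, ← hcardr]
    exact FiniteField.pow_card_pow b x
  let frh : ℕ → (K →+* K) := fun t =>
    { toFun := fun x => x ^ q ^ t
      map_one' := one_pow _
      map_mul' := fun x y => mul_pow x y _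
      map_zero' := zero_pow (hq0' t)
      map_add' := fun x y => hadd t x y }
  have hS0 : ∀ γ ∈ S, φ (Ψ γ) = 0 := by
    intro γ hγ
    rw [hφΨ]
    rw [hS] at hγ
    simpa [ZSet] using hγ
  have hS1 : ∀ β : K, β ∉ S → φ (Ψ β) ≠ 0 := by
    intro β hβ h0
    rw [hφΨ] at h0
    exact hβ (by rw [hS]; simpa [ZSet] using h0)
  have hfr : ∀ b : ℕ, ∃ (fr : K →ₗ[Fqr] K) (Θ : (Fin w → K) →+ (Fin w → K)) (σ : K ≃+* K),
      (∀ x : K, fr x = x ^ q ^ (b * r)) ∧ Function.Injective Θ ∧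
      (∀ (c : K) (x : Fin w → K), Θ (c • x) = σ c • Θ x) ∧
      (∀ β : K, Ψ (β ^ q ^ (b * r)) = Θ (Ψ β)) := by
    intro b
    refine ⟨{ toFun := fun x => x ^ q ^ (b * r)
              map_add' := fun x y => hadd _ x y
              map_smul' := fun c x => by
                simp only [Algebra.smul_def, RingHom.id_apply, mul_pow, hrfix c b] },
            { toFun := fun x i => x i ^ q ^ (b * r)
              map_zero' := funext fun i => by
                simp [zero_pow (hq0' (b * r))]
              map_add' := fun x y => funext fun i => hadd _ _ _ },
            RingEquiv.ofBijective (frh (b * r))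
              ((Finite.injective_iff_bijective).1 (frh (b * r)).injective),
            fun x => rfl, ?_, ?_, ?_⟩
    · intro x y h
      funext i
      exact (frh (b * r)).injective (congrFun h i)
    · intro c x
      funext i
      show (c * x i) ^ q ^ (b * r) = (frh (b * r)) c * x i ^ q ^ (b * r)
      show (c * x i) ^ q ^ (b * r) = c ^ q ^ (b * r) * x i ^ q ^ (b * r)
      exact mul_pow _ _ _
    · intro β
      funext t
      show (∑ k : Fin n, ι (cf t k) * (β ^ q ^ (b * r)) ^ q ^ (r * (k : ℕ)))
        = (∑ k : Fin n, ι (cf t k) * β ^ q ^ (r * (k : ℕ))) ^ q ^ (b * r)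
      rw [show ((∑ k : Fin n, ι (cf t k) * β ^ q ^ (r * (k : ℕ))) ^ q ^ (b * r))
          = frh (b * r) (∑ k : Fin n, ι (cf t k) * β ^ q ^ (r * (k : ℕ))) from rfl,
        map_sum]
      refine Finset.sum_congr rfl fun k _ => ?_
      rw [show frh (b * r) (ι (cf t k) * β ^ q ^ (r * (k : ℕ)))
          = (ι (cf t k) * β ^ q ^ (r * (k : ℕ))) ^ q ^ (b * r) from rfl,
        mul_pow, hιfix, pow_right_comm]
  have hkey := auxKey (q := q) (r := r) S Ψ φ hS0 hS1 hfr I hI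
  refine hkey.trans ?_
  have h3 : Module.finrank K (Submodule.span K (Ψ '' ↑I)) ≤ Module.finrank K (Fin w → K) :=
    Submodule.finrank_le _
  rw [Module.finrank_pi K] at h3
  simpa using h3
end

section
/- Assume m = n, r and n coprime, and let α, α^q, ..., α^{q^{n−1}} be a normal basis of F_{q^n} over F_q. Define E : F_q^n → F_{q^n}^n by E(c_0, c_1, ..., c_{n−1}) = (c_0 α, c_1 α^{q^r}, c_2 α^{q^{2r}}, ..., c_{n−1} α^{q^{(n−1)r}}). Then an arbitrary (linear or non-linear) code C ⊆ F_q^n is cyclic if and only if E(C) ⊆ F_{q^n}^n is q^r-cyclic. Moreover, C is F_q-linear if and only if E(C) is F_q-linear, and wt_H(c) = wt_R(E(c)) for all c ∈ F_q^n. -/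
/-- Assume `m = n`, `gcd(r, n) = 1`, and let `α, α^q, …, α^{q^{n-1}}`
be a normal basis of `F_{q^n}` over `F_q`. Define `E : F_q^n → F_{q^n}^n` by
`E(c)_i = c_i · α^{q^{ir}}`. Then an arbitrary code `C ⊆ F_q^n` is cyclic iff `E(C)` is
`q^r`-cyclic; `C` is `F_q`-linear iff `E(C)` is; and `wt_H(c) = wt_R(E(c))` for all
`c`. -/
theorem statement18
    (q n r : ℕ) (hq : IsPrimePow q) (hn : 0 < n) (hr : 0 < r) [NeZero n]
    (hcop : Nat.Coprime r n)
    (Fq Fn : Type*) [Field Fq] [Fintype Fq] [Field Fn] [Fintype Fn] [Algebra Fq Fn]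
    (hcardq : Fintype.card Fq = q) (hcardn : Fintype.card Fn = q ^ n)
    (α : Fn) (bas : Module.Basis (Fin n) Fq Fn) (hbas : ∀ i : Fin n, bas i = α ^ q ^ (i : ℕ))
    (E : (Fin n → Fq) → (Fin n → Fn))
    (hE : ∀ (c : Fin n → Fq) (i : Fin n),
      E c i = algebraMap Fq Fn (c i) * α ^ q ^ ((i : ℕ) * r))
    (C : Set (Fin n → Fq)) :
    ((∀ c ∈ C, (fun i : Fin n => c (i - 1)) ∈ C) ↔ IsQrCyclic q r n (E '' C)) ∧
    ((∃ S : Submodule Fq (Fin n → Fq), (S : Set (Fin n → Fq)) = C) ↔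
      ∃ S : Submodule Fq (Fin n → Fn), (S : Set (Fin n → Fn)) = E '' C) ∧
    (∀ c : Fin n → Fq, {i : Fin n | c i ≠ 0}.ncard
      = Module.finrank Fq ↥(Submodule.span Fq (Set.range (E c)))) := by
  classical
  obtain ⟨m, rfl⟩ : ∃ m, n = m + 1 := ⟨n - 1, by omega⟩
  have hα : α ≠ 0 := by
    have h0 := hbas ⟨0, hn⟩
    have hne := bas.ne_zero ⟨0, hn⟩
    rw [h0] at hne
    simpa using hne
  have hαpow : ∀ k : ℕ, α ^ q ^ k ≠ 0 := fun k => pow_ne_zero _ hα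
  have hfixq : ∀ a : Fq, a ^ q ^ r = a := by
    intro a
    have h := FiniteField.pow_card_pow a (n := r)
    rwa [hcardq] at h
  have hFn : ∀ (x : Fn) (t : ℕ), x ^ q ^ ((m + 1) * t) = x := by
    intro x t
    have h := FiniteField.pow_card_pow x (n := t)
    rwa [hcardn, ← pow_mul] at h
  have hmod : ∀ k : ℕ, α ^ q ^ k = α ^ q ^ (k % (m + 1)) := by
    intro k
    conv_lhs => rw [← Nat.mod_add_div k (m + 1)]
    rw [pow_add, pow_mul]
    exact hFn _ _
  have hsub : ∀ i : Fin (m + 1), ((i - 1 : Fin (m + 1)) : ℕ)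
      = if (i : ℕ) = 0 then m else (i : ℕ) - 1 := by
    intro i
    rw [Fin.coe_sub_one]
    by_cases h : i = 0
    · rw [if_pos h, if_pos (by simp [h])]
    · rw [if_neg h, if_neg (fun h' => h (Fin.ext (by simp [h'])))]
  have hshift : ∀ (c : Fin (m + 1) → Fq) (i : Fin (m + 1)),
      E c (i - 1) ^ q ^ r = E (fun j => c (j - 1)) i := by
    intro c i
    rw [hE, hE]
    rw [mul_pow, ← map_pow, hfixq, ← pow_mul, ← pow_add]
    congr 1
    have hAB : (((i - 1 : Fin (m + 1)) : ℕ) * r + r) % (m + 1)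
        = ((i : ℕ) * r) % (m + 1) := by
      rw [hsub i]
      by_cases h : (i : ℕ) = 0
      · rw [if_pos h, h]
        have hs : m * r + r = (m + 1) * r := by ring
        rw [hs, Nat.zero_mul, Nat.mul_mod_right, Nat.zero_mod]
      · rw [if_neg h]
        have hc : (i : ℕ) - 1 + 1 = (i : ℕ) := Nat.sub_add_cancel (Nat.pos_of_ne_zero h)
        have hs : ((i : ℕ) - 1) * r + r = (i : ℕ) * r := by
          calc ((i : ℕ) - 1) * r + r = (((i : ℕ) - 1) + 1) * r := by ring
          _ = (i : ℕ) * r := by rw [hc]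
        rw [hs]
    rw [hmod (((i - 1 : Fin (m + 1)) : ℕ) * r + r), hmod ((i : ℕ) * r), hAB]
  have hinj : Function.Injective E := by
    intro c c' h
    funext i
    have hi := congrFun h i
    rw [hE, hE] at hi
    have h2 := mul_right_cancel₀ (hαpow _) hi
    exact (algebraMap Fq Fn).injective h2
  -- the permutation σ
  have hσlt : ∀ i : Fin (m + 1), ((i : ℕ) * r) % (m + 1) < m + 1 :=
    fun i => Nat.mod_lt _ hn
  set σ : Fin (m + 1) → Fin (m + 1) := fun i => ⟨((i : ℕ) * r) % (m + 1), hσlt i⟩ with hσ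
  have hσinj : Function.Injective σ := by
    intro i j hij
    have h1 : ((i : ℕ) * r) % (m + 1) = ((j : ℕ) * r) % (m + 1) := by
      simpa [hσ] using congrArg Fin.val hij
    have h2 : (i : ℕ) ≡ (j : ℕ) [MOD (m + 1)] :=
      Nat.ModEq.cancel_right_of_coprime hcop.symm h1
    exact Fin.ext ((Nat.mod_eq_of_lt i.isLt) ▸ (Nat.mod_eq_of_lt j.isLt) ▸ h2)
  have hEσ : ∀ (c : Fin (m + 1) → Fq) (i : Fin (m + 1)), E c i = c i • bas (σ i) := by
    intro c i
    rw [hE, hbas, Algebra.smul_def]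
    congr 1
    exact hmod ((i : ℕ) * r)
  refine ⟨?_, ?_, ?_⟩
  · constructor
    · intro hC d hd
      obtain ⟨c, hc, rfl⟩ := hd
      refine ⟨fun j => c (j - 1), hC c hc, ?_⟩
      funext i
      exact (hshift c i).symm
    · intro hQ c hc
      have h := hQ (E c) ⟨c, hc, rfl⟩
      obtain ⟨c', hc', hEc'⟩ := h
      have heq : E c' = E (fun j => c (j - 1)) := by
        rw [hEc']
        funext i
        exact hshift c i
      have := hinj heq
      rwa [← this]
  · have hadd : ∀ x y : Fin (m + 1) → Fq, E (x + y) = E x + E y := by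
      intro x y
      funext i
      have h1 : (x + y) i = x i + y i := rfl
      have h2 : (E x + E y) i = E x i + E y i := rfl
      rw [hE, h1, map_add, h2, hE, hE, add_mul]
    have hsmul : ∀ (a : Fq) (x : Fin (m + 1) → Fq), E (a • x) = a • E x := by
      intro a x
      funext i
      have h1 : (a • x) i = a * x i := rfl
      have h2 : (a • E x) i = a • (E x i) := rfl
      rw [hE, h1, map_mul, h2, hE, Algebra.smul_def, mul_assoc]
    let Elin : (Fin (m + 1) → Fq) →ₗ[Fq] (Fin (m + 1) → Fn) :=
      { toFun := E
        map_add' := hadd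
        map_smul' := hsmul }
    constructor
    · rintro ⟨S, rfl⟩
      exact ⟨S.map Elin, by rw [Submodule.map_coe]; rfl⟩
    · rintro ⟨S, hS⟩
      refine ⟨S.comap Elin, ?_⟩
      have h3 : (S.comap Elin : Set (Fin (m + 1) → Fq)) = E ⁻¹' (E '' C) := by
        rw [Submodule.comap_coe, ← hS]; rfl
      rw [h3, Set.preimage_image_eq C hinj]
  · intro c
    set T : Set (Fin (m + 1)) := {i | c i ≠ 0} with hT
    haveI : Fintype ↥T := Fintype.ofFinite _
    set f : ↥T → Fn := fun i => E c i with hf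
    have hspan : Submodule.span Fq (Set.range (E c)) = Submodule.span Fq (Set.range f) := by
      apply le_antisymm
      · rw [Submodule.span_le]
        rintro x ⟨i, rfl⟩
        by_cases hi : i ∈ T
        · exact Submodule.subset_span ⟨⟨i, hi⟩, rfl⟩
        · have hc0 : c i = 0 := not_not.mp hi
          have hz : E c i = 0 := by rw [hE, hc0, map_zero, zero_mul]
          rw [hz]
          exact Submodule.zero_mem _
      · rw [Submodule.span_le]
        rintro x ⟨i, rfl⟩
        exact Submodule.subset_span ⟨(i : Fin (m + 1)), rfl⟩
    have hv : LinearIndependent Fq (fun i : ↥T => bas (σ i)) :=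
      bas.linearIndependent.comp (σ ∘ Subtype.val) (hσinj.comp Subtype.val_injective)
    have hfind : LinearIndependent Fq f := by
      have hw : f = (fun i : ↥T => Units.mk0 (c i) i.2) • (fun i : ↥T => bas (σ i)) := by
        funext i
        simp only [hf, Pi.smul_apply', Units.smul_def, Units.val_mk0]
        exact hEσ c i
      rw [hw]
      exact hv.units_smul _
    rw [hspan, finrank_span_eq_card hfind]
    rw [← Nat.card_coe_set_eq, Nat.card_eq_fintype_card]
end
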